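/- arXiv:2105.07679 — 7 statements merged into one kernel-verified Lean document; each statement's English description precedes it below -/
import Mathlib

section
/- Let M : Matrix (Fin m₁ × m₂) (Fin n₁ × n₂) ℂ with blocks M_{i,j}, and let t ≤ m₁. Suppose: (a) the blocks M_{0,0}, …, M_{t-1,0} of the first block-column are linearly independent; (b) M_{i,0} = 0 for all i ≥ t; (c) there exist i₀ ≥ t and j₀ ≠ 0 such that M_{i₀,j₀} is not in the span of {M_{0,0}, …, M_{t-1,0}}. Then there exists a constant k ∈ ℂ such that the family {M_{i,0} + k • M_{i,j₀} : i ∈ Fin m₁} (the first block-column after adding k times the j₀-th block-column) spans a subspace of Matrix m₂ n₂ ℂ of dimension at least t + 1. -/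
open Matrix Submodule Module

/-- The `(i,j)`-block of a bipartite matrix. -/
noncomputable def blockOf {m₁ n₁ m₂ n₂ : Type*}
    (M : Matrix (m₁ × m₂) (n₁ × n₂) ℂ) (i : m₁) (j : n₁) : Matrix m₂ n₂ ℂ :=
  Matrix.of fun k l => M (i, k) (j, l)

/-! Writing `v` for the first `t` blocks of the first block-column and `w` for the corresponding
blocks of column `j₀`, the family `v` together with `M_{i₀,j₀}` is linearly independent.
Linear independence is an open condition, so it survives replacing `v` by `v + k • w` for every
small `k`, in particular for some `k ≠ 0`; the updated column then contains these `t` vectors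
and `k • M_{i₀,j₀}`, since `M_{i₀,0} = 0`. -/

open Filter Topology

theorem LinearIndependent.exists_ne_zero_add_smul {𝕜 E ι : Type*} [NontriviallyNormedField 𝕜]
    [CompleteSpace 𝕜] [NormedAddCommGroup E] [NormedSpace 𝕜 E] [Finite ι] {v : ι → E}
    (hv : LinearIndependent 𝕜 v) (w : ι → E) :
    ∃ k : 𝕜, k ≠ 0 ∧ LinearIndependent 𝕜 (v + k • w) := by
  have hcont : Continuous fun k : 𝕜 => v + k • w := by fun_prop
  have hnear : ∀ᶠ k in 𝓝 (0 : 𝕜), LinearIndependent 𝕜 (v + k • w) :=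
    (hcont.tendsto' 0 v (by simp)).eventually hv.eventually
  obtain ⟨k, hk, hk0⟩ :=
    (hnear.filter_mono nhdsWithin_le_nhds |>.and (self_mem_nhdsWithin (s := {0}ᶜ))).exists
  exact ⟨k, hk0, hk⟩

theorem LinearIndependent.card_le_finrank_span {K V ι : Type*} [DivisionRing K] [AddCommGroup V]
    [Module K V] [FiniteDimensional K V] [Fintype ι] {g : ι → V} (hg : LinearIndependent K g)
    {s : Set V} (hgs : ∀ i, g i ∈ span K s) : Fintype.card ι ≤ finrank K (span K s) := by
  rw [← finrank_span_eq_card hg]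
  exact Submodule.finrank_mono (span_le.2 (Set.range_subset_iff.2 hgs))

theorem exists_const_column_update_dim_ge_general
    {m₁ n₁ : ℕ} {m₂ n₂ : Type*} [Fintype m₂] [Fintype n₂] [NeZero n₁]
    (M : Matrix (Fin m₁ × m₂) (Fin n₁ × n₂) ℂ) (t : ℕ) (ht : t ≤ m₁)
    (ha : LinearIndependent ℂ
      (fun i : Fin t => blockOf M ⟨i.val, lt_of_lt_of_le i.isLt ht⟩ 0))
    (hb : ∀ i : Fin m₁, t ≤ i.val → blockOf M i 0 = 0)
    (i₀ : Fin m₁) (j₀ : Fin n₁) (hi₀ : t ≤ i₀.val)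
    (hnot : blockOf M i₀ j₀ ∉ Submodule.span ℂ
      (Set.range fun i : Fin t => blockOf M ⟨i.val, lt_of_lt_of_le i.isLt ht⟩ 0)) :
    ∃ k : ℂ, t + 1 ≤ Module.finrank ℂ (Submodule.span ℂ
      (Set.range fun i : Fin m₁ => blockOf M i 0 + k • blockOf M i j₀)) := by
  -- any norm will do: it only supplies the topology in which linear independence is open
  let : NormedAddCommGroup (Matrix m₂ n₂ ℂ) := Matrix.normedAddCommGroup
  let : NormedSpace ℂ (Matrix m₂ n₂ ℂ) := Matrix.normedSpace
  obtain ⟨k, hk0, hk⟩ := (linearIndependent_finSnoc.2 ⟨ha, hnot⟩).exists_ne_zero_add_smul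
    (Fin.snoc (fun i : Fin t => blockOf M (Fin.castLE ht i) j₀) 0)
  refine ⟨k, ?_⟩
  set S := span ℂ (Set.range fun i : Fin m₁ => blockOf M i 0 + k • blockOf M i j₀)
  have hcol (i : Fin m₁) : blockOf M i 0 + k • blockOf M i j₀ ∈ S := subset_span ⟨i, rfl⟩
  refine (Fintype.card_fin (t + 1)).ge.trans (hk.card_le_finrank_span fun i => ?_)
  induction i using Fin.lastCases with
  | last =>
    have hi₀col := hcol i₀
    rw [hb i₀ hi₀, zero_add, smul_mem_iff _ hk0] at hi₀col
    simpa using hi₀col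
  | cast i =>
    simp only [Pi.add_apply, Pi.smul_apply, Fin.snoc_castSucc]
    exact hcol (Fin.castLE ht i)

/-- Lemma 4(i): if the first `t` blocks of the first block-column are linearly
independent, the remaining blocks of the first block-column vanish, and some block
`M_{i₀,j₀}` (with `i₀ ≥ t`, `j₀ ≠ 0`) is outside the span of these `t` blocks, then
for some constant `k` the first block-column plus `k` times the `j₀`-th block-column
spans a space of dimension at least `t + 1`. -/
theorem exists_const_column_update_dim_ge
    {m₁ n₁ : ℕ} {m₂ n₂ : Type*} [Fintype m₂] [Fintype n₂] [NeZero n₁]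
    (M : Matrix (Fin m₁ × m₂) (Fin n₁ × n₂) ℂ) (t : ℕ) (ht : t ≤ m₁)
    (ha : LinearIndependent ℂ
      (fun i : Fin t => blockOf M ⟨i.val, lt_of_lt_of_le i.isLt ht⟩ 0))
    (hb : ∀ i : Fin m₁, t ≤ i.val → blockOf M i 0 = 0)
    (i₀ : Fin m₁) (j₀ : Fin n₁) (hi₀ : t ≤ i₀.val) (hj₀ : j₀ ≠ 0)
    (hnot : blockOf M i₀ j₀ ∉ Submodule.span ℂ
      (Set.range fun i : Fin t => blockOf M ⟨i.val, lt_of_lt_of_le i.isLt ht⟩ 0)) :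
    ∃ k : ℂ, t + 1 ≤ Module.finrank ℂ (Submodule.span ℂ
      (Set.range fun i : Fin m₁ => blockOf M i 0 + k • blockOf M i j₀)) :=
  exists_const_column_update_dim_ge_general M t ht ha hb i₀ j₀ hi₀ hnot
end

section
/- Let M : Matrix (Fin s × m₂) (Fin n₁ × n₂) ℂ with blocks M_{i,j}, and let t < s. Suppose: (a) the s + t blocks M_{0,0}, …, M_{s-1,0}, M_{0,1}, …, M_{t-1,1} are linearly independent; (b) for every i with t ≤ i ≤ s−1, the block M_{i,1} lies in the span of {M_{0,0}, …, M_{s-1,0}}; (c) there exist i₀ with t ≤ i₀ ≤ s−1 and j₀ ≥ 2 such that M_{i₀,j₀} is not in the span of the s + t blocks from (a). Then there exists a constant k ∈ ℂ such that the family {M_{i,0} : i < s} ∪ {M_{i,1} + k • M_{i,j₀} : i < s} spans a subspace of Matrix m₂ n₂ ℂ of dimension at least s + t + 1. -/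
open Matrix Submodule Module

/-!
Write `u i, v i, w i` for the blocks of columns `0, 1, j₀`. By (a) and (c) the `s + t + 1`
vectors `w i₀, u i, v i` (`i < t`) are independent, and independence survives the perturbation
`v i ↦ v i + k • w i` for all but finitely many `k`: for an injective `A` with left inverse `P`,
`A + k • B` can only fail to be injective when `-k⁻¹` is an eigenvalue of `P ∘ B`. For such a
`k ≠ 0` all perturbed vectors lie in the span `S` of `u i, v i + k • w i`, including `w i₀`,
since `v i₀ ∈ span u ⊆ S` by (b). Hence `dim S ≥ s + t + 1`.
-/

open Function Filter

theorem LinearMap.eventually_injective_add_smul {K V W : Type*} [Field K] [AddCommGroup V]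
    [Module K V] [FiniteDimensional K V] [AddCommGroup W] [Module K W]
    {A : V →ₗ[K] W} (hA : Injective A) (B : V →ₗ[K] W) :
    ∀ᶠ k : K in cofinite, Injective (A + k • B) := by
  obtain ⟨P, hPA⟩ := A.exists_leftInverse_of_injective (ker_eq_bot.mpr hA)
  have hfin := (Module.End.finite_hasEigenvalue (P ∘ₗ B)).image fun μ => -μ⁻¹
  refine hfin.subset fun k hk => ?_
  obtain ⟨x, hx, hx0⟩ : ∃ x, (A + k • B) x = 0 ∧ x ≠ 0 := by
    simpa [injective_iff_map_eq_zero, not_forall] using hk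
  have hk0 : k ≠ 0 := by
    rintro rfl
    exact hx0 (hA (by simpa using hx))
  refine ⟨-k⁻¹, Module.End.hasEigenvalue_of_hasEigenvector ⟨?_, hx0⟩, by simp⟩
  have hPx : x + k • P (B x) = 0 := by
    simpa only [add_apply, smul_apply, map_add, map_smul, ← comp_apply P A, hPA, id_apply,
      map_zero] using congr(P $hx)
  rw [Module.End.mem_eigenspace_iff, comp_apply, neg_smul, eq_neg_iff_add_eq_zero, add_comm,
    ← inv_smul_smul₀ hk0 (P (B x)), ← smul_add, hPx, smul_zero]

section

variable {K V : Type*} [Field K] [AddCommGroup V] [Module K V]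

theorem LinearIndependent.eventually_add_smul {ι : Type*} [Fintype ι] {F : ι → V}
    (hF : LinearIndependent K F) (G : ι → V) :
    ∀ᶠ k : K in cofinite, LinearIndependent K fun i => F i + k • G i := by
  rw [linearIndependent_iff_injective_fintypeLinearCombination] at hF
  refine (LinearMap.eventually_injective_add_smul hF (Fintype.linearCombination K G)).mono
    fun k hk => ?_
  rw [linearIndependent_iff_injective_fintypeLinearCombination]
  convert hk using 2
  ext c
  simp [Fintype.linearCombination_apply, smul_add, Finset.sum_add_distrib, Finset.smul_sum,
    smul_comm k]

theorem exists_card_add_card_lt_finrank_span_add_smul [Infinite K]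
    {α β ι : Type*} [Fintype α] [Fintype β] [Finite ι]
    {u : α → V} {v w : ι → V} {e : β → ι} {i₀ : ι}
    (hli : LinearIndependent K (Sum.elim u (v ∘ e)))
    (hv : v i₀ ∈ span K (Set.range u))
    (hw : w i₀ ∉ span K (Set.range (Sum.elim u (v ∘ e)))) :
    ∃ k : K, Fintype.card α + Fintype.card β <
      finrank K (span K (Set.range (Sum.elim u fun i => v i + k • w i))) := by
  let G : Option (α ⊕ β) → V := fun o => Option.casesOn' o 0 (Sum.elim 0 (w ∘ e))
  obtain ⟨k, hk, hk0⟩ :=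
    (((hli.option hw).eventually_add_smul G).and (eventually_cofinite_ne 0)).exists
  refine ⟨k, ?_⟩
  set S := span K (Set.range (Sum.elim u fun i => v i + k • w i))
  have hu : ∀ a, u a ∈ S := fun a => subset_span ⟨Sum.inl a, rfl⟩
  have hvw : ∀ i, v i + k • w i ∈ S := fun i => subset_span ⟨Sum.inr i, rfl⟩
  have hw₀ : w i₀ ∈ S := by
    have hv₀ : v i₀ ∈ S := span_le.mpr (Set.range_subset_iff.mpr hu) hv
    have := S.smul_mem k⁻¹ (S.sub_mem (hvw i₀) hv₀)
    rwa [add_sub_cancel_left, inv_smul_smul₀ hk0] at this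
  have : Module.Finite K S := Module.Finite.span_of_finite K (Set.finite_range _)
  rw [Nat.lt_iff_add_one_le, show Fintype.card α + Fintype.card β + 1 =
    Fintype.card (Option (α ⊕ β)) by simp, ← finrank_span_eq_card hk]
  refine finrank_mono (span_le.mpr (Set.range_subset_iff.mpr ?_))
  rintro (_ | a | b)
  · simpa [G] using hw₀
  · simpa [G] using hu a
  · exact hvw (e b)

end

/-- Lemma 4(ii): suppose the `s + t` blocks
`M_{0,0}, …, M_{s-1,0}, M_{0,1}, …, M_{t-1,1}` are linearly independent, each block
`M_{i,1}` with `t ≤ i ≤ s-1` lies in the span of the first block-column, and some block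
`M_{i₀,j₀}` (with `t ≤ i₀`, `2 ≤ j₀`) lies outside the span of those `s + t` blocks.
Then for some constant `k`, the first block-column together with the second
block-column plus `k` times the `j₀`-th block-column spans a space of dimension at
least `s + t + 1`. -/
theorem exists_const_second_column_update_dim_ge
    {s n₁ : ℕ} {m₂ n₂ : Type*}
    (hn₁ : 2 ≤ n₁)
    (M : Matrix (Fin s × m₂) (Fin n₁ × n₂) ℂ) (t : ℕ) (hts : t < s)
    (ha : LinearIndependent ℂ (Sum.elim
      (fun i : Fin s => blockOf M i ⟨0, by omega⟩)
      (fun i : Fin t => blockOf M ⟨i.val, lt_trans i.isLt hts⟩ ⟨1, by omega⟩)))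
    (hb : ∀ i : Fin s, t ≤ i.val →
      blockOf M i ⟨1, by omega⟩ ∈ Submodule.span ℂ
        (Set.range fun i : Fin s => blockOf M i ⟨0, by omega⟩))
    (i₀ : Fin s) (j₀ : Fin n₁) (hi₀ : t ≤ i₀.val)
    (hnot : blockOf M i₀ j₀ ∉ Submodule.span ℂ (Set.range (Sum.elim
      (fun i : Fin s => blockOf M i ⟨0, by omega⟩)
      (fun i : Fin t => blockOf M ⟨i.val, lt_trans i.isLt hts⟩ ⟨1, by omega⟩)))) :
    ∃ k : ℂ, s + t + 1 ≤ Module.finrank ℂ (Submodule.span ℂ (Set.range (Sum.elim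
      (fun i : Fin s => blockOf M i ⟨0, by omega⟩)
      (fun i : Fin s => blockOf M i ⟨1, by omega⟩ + k • blockOf M i j₀)))) := by
  obtain ⟨k, hk⟩ := exists_card_add_card_lt_finrank_span_add_smul
    (v := fun i => blockOf M i ⟨1, by omega⟩) (w := fun i => blockOf M i j₀)
    (e := fun i : Fin t => ⟨i, lt_trans i.isLt hts⟩) ha (hb i₀ hi₀) hnot
  rw [Fintype.card_fin, Fintype.card_fin] at hk
  exact ⟨k, hk⟩
end

section
/- Canonical form under local equivalence: let m₁, m₂, n₁, n₂ ≥ 1 and let M : Matrix (Fin m₁ × Fin m₂) (Fin n₁ × Fin n₂) ℂ have Schmidt rank K ≥ 1. Then there exist invertible matrices U : Matrix (Fin m₁) (Fin m₁) ℂ, V : Matrix (Fin m₂) (Fin m₂) ℂ, W : Matrix (Fin n₁) (Fin n₁) ℂ, X : Matrix (Fin n₂) (Fin n₂) ℂ, an integer p with 1 ≤ p ≤ n₁, and integers k₀ ≥ k₁ ≥ ⋯ ≥ k_{p-1} ≥ 1 with k₀ ≤ m₁ and k₀ + k₁ + ⋯ + k_{p-1} = K, such that the locally equivalent matrix N = (U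 ⊗ₖ V) * M * (W ⊗ₖ X) satisfies: (a) the family of blocks {N_{i,j} : j < p, i < k_j} (of cardinality K) is linearly independent; (b) N_{i,0} = 0 for every block-row index i ≥ k₀; (c) every block N_{i,j} of N lies in the span of {N_{a,b} : b ≤ min(j, p−1), a < k_b}. -/
open Matrix Submodule Module
open scoped Kronecker

/-- The Schmidt rank of a bipartite matrix: the dimension of the span of its blocks. -/
noncomputable def schmidtRank {m₁ n₁ m₂ n₂ : Type*}
    (M : Matrix (m₁ × m₂) (n₁ × n₂) ℂ) : ℕ :=
  Module.finrank ℂ (Submodule.span ℂ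
    (Set.range fun ij : m₁ × n₁ => blockOf M ij.1 ij.2))

/-!
The `(i, j)`-block of `(U ⊗ₖ 1) * M * (W ⊗ₖ 1)` is `ψ (W.col j) (U.row i)` for the bilinear map
`ψ w u = ∑ a b, u a * w b • M_{a,b}`, so the canonical form amounts to a choice of bases `u` of
`ℂ^{m₁}` and `w` of `ℂ^{n₁}`.

Choose `w 0, w 1, …` greedily, each maximising the dimension of `T (j+1) = T j ⊔ range (ψ (w j))`
(with `T 0 = ⊥`). By submodularity of dimension the increments `k j = dim T (j+1) - dim T j`
are nonincreasing, and the chain stabilises after `p` steps at the span of all blocks, of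
dimension `K = ∑ k j`. Over an infinite field a single sequence `u 0, u 1, …` can be chosen such
that, for every `j < p`, the vectors `ψ (w j) (u i)` with `i < k j` are independent modulo `T j`:
at each step a generic vector avoids finitely many proper subspaces. The staircase blocks
`ψ (w j) (u i)` (`j < p`, `i < k j`) then form a basis of `T p` adapted to the chain, which gives
(a) and (c). Completing the `u`'s by a basis of `ker (ψ (w 0))` gives (b), and the `w`'s may be
completed arbitrarily.
-/

open Set hiding range
open LinearMap

section LinearAlgebra

variable {K E : Type*} [Field K] [AddCommGroup E] [Module K E]

theorem Submodule.finrank_sup_add_finrank_le_of_le [FiniteDimensional K E]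
    {S S' : Submodule K E} (R : Submodule K E) (h : S ≤ S') :
    finrank K ↥(S' ⊔ R) + finrank K S ≤ finrank K ↥(S ⊔ R) + finrank K S' := by
  have key := Submodule.finrank_sup_add_finrank_inf_eq (S ⊔ R) S'
  rw [sup_right_comm, sup_eq_right.mpr h] at key
  have := Submodule.finrank_mono (le_inf le_sup_left h : S ≤ (S ⊔ R) ⊓ S')
  omega

theorem Submodule.finrank_map_mkQ_add_finrank [FiniteDimensional K E] (S T : Submodule K E) :
    finrank K (map S.mkQ T) + finrank K S = finrank K ↥(S ⊔ T) := by
  have h := (S.mkQ.domRestrict (S ⊔ T)).finrank_range_add_finrank_ker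
  rwa [LinearMap.range_domRestrict, map_sup, mkQ_map_self, bot_sup_eq, ker_domRestrict, ker_mkQ,
    (comapSubtypeEquivOfLe le_sup_left).finrank_eq] at h

theorem LinearIndepOn.finrank_span_image_Iio {f : ℕ → E} {k : ℕ}
    (h : LinearIndepOn K f (Iio k)) : finrank K (span K (f '' Iio k)) = k := by
  rw [image_eq_range, finrank_span_eq_card h, Fintype.card_eq_nat_card, Nat.card_coe_set_eq,
    ncard_Iio_nat]

theorem LinearIndepOn.le_finrank_of_Iio [FiniteDimensional K E] {f : ℕ → E} {k : ℕ}
    (h : LinearIndepOn K f (Iio k)) : k ≤ finrank K E :=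
  h.finrank_span_image_Iio ▸ Submodule.finrank_le _

theorem exists_linearIndependent_extend_of_disjoint [FiniteDimensional K E] {v : ℕ → E} {k n : ℕ}
    (hv : LinearIndepOn K v (Iio k)) {S : Submodule K E} (hS : Disjoint (span K (v '' Iio k)) S)
    (hn : k + finrank K S = n) :
    ∃ f : Fin n → E, LinearIndependent K f ∧ (∀ i : Fin n, (i : ℕ) < k → f i = v i) ∧
      ∀ i : Fin n, k ≤ (i : ℕ) → f i ∈ S := by
  subst hn
  let b := S.subtype ∘ finBasis K S
  have hv' : LinearIndependent K fun i : Fin k => v i :=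
    (linearIndependent_equiv' Fin.equivSubtype rfl).mpr hv
  have hb : LinearIndependent K b := (finBasis K S).linearIndependent.map' _ S.ker_subtype
  have hspan : span K (Set.range b) = S := by
    rw [Set.range_comp, span_image, (finBasis K S).span_eq, map_subtype_top]
  have hrange : Set.range (fun i : Fin k => v i) = v '' Iio k := by
    ext; simp [Fin.exists_iff]
  refine ⟨Fin.append (fun i : Fin k => v i) b, ?_, ?_, ?_⟩
  · refine (linearIndependent_equiv finSumFinEquiv).mp ?_
    rw [show _ ∘ finSumFinEquiv = _ from Fin.append_comp_sumElim]
    exact hv'.sum_type hb (by rwa [hspan, hrange])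
  · refine Fin.addCases (fun i _ => ?_) (fun i hi => ?_)
    · simp
    · simp at hi
  · refine Fin.addCases (fun i hi => ?_) (fun i _ => ?_)
    · simp at hi; omega
    · simp [b]

theorem exists_linearIndependent_extend [FiniteDimensional K E] {v : ℕ → E} {k n : ℕ}
    (hv : LinearIndepOn K v (Iio k)) (hn : finrank K E = n) :
    ∃ f : Fin n → E, LinearIndependent K f ∧ ∀ i : Fin n, (i : ℕ) < k → f i = v i := by
  obtain ⟨S, hS⟩ := (span K (v '' Iio k)).exists_isCompl
  have := finrank_add_eq_of_isCompl hS
  obtain ⟨f, hf, hfv, -⟩ := exists_linearIndependent_extend_of_disjoint (n := n) hv hS.disjoint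
    (by rw [← hn, ← this, hv.finrank_span_image_Iio])
  exact ⟨f, hf, hfv⟩

theorem exists_linearIndependent_extend_ker [FiniteDimensional K E] {F : Type*} [AddCommGroup F]
    [Module K F] {L : E →ₗ[K] F} {v : ℕ → E} {k n : ℕ}
    (hv : LinearIndepOn K (fun i => L (v i)) (Iio k)) (hk : finrank K (range L) = k)
    (hn : finrank K E = n) :
    ∃ f : Fin n → E, LinearIndependent K f ∧ (∀ i : Fin n, (i : ℕ) < k → f i = v i) ∧
      ∀ i : Fin n, k ≤ (i : ℕ) → f i ∈ ker L := by
  refine exists_linearIndependent_extend_of_disjoint (n := n) (S := ker L) hv.of_comp ?_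
    (by rw [← hk, ← hn, L.finrank_range_add_finrank_ker])
  simpa [image_eq_range] using Submodule.range_ker_disjoint (f := L) hv

theorem exists_forall_apply_notMem [Infinite K] {ι : Type*} [Finite ι] {F : ι → Type*}
    [∀ i, AddCommGroup (F i)] [∀ i, Module K (F i)] (L : ∀ i, E →ₗ[K] F i)
    (T : ∀ i, Submodule K (F i)) (hT : ∀ i, ¬range (L i) ≤ T i) :
    ∃ x, ∀ i, L i x ∉ T i := by
  by_contra! hcover
  obtain ⟨i, htop⟩ := Subspace.exists_eq_top_of_iUnion_eq_univ (p := fun i => comap (L i) (T i))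
    (eq_univ_of_forall fun x => mem_iUnion.mpr (hcover x))
  exact hT i (range_le_iff_comap.mpr htop)

theorem exists_seq_linearIndepOn_comp [Infinite K] {ι : Type*} [Finite ι] {F : ι → Type*}
    [∀ i, AddCommGroup (F i)] [∀ i, Module K (F i)] [∀ i, FiniteDimensional K (F i)]
    (L : ∀ i, E →ₗ[K] F i) :
    ∃ v : ℕ → E, ∀ i, LinearIndepOn K (fun e => L i (v e)) (Iio (finrank K (range (L i)))) := by
  set r := fun i => finrank K (range (L i))
  suffices ∀ d, ∃ v : ℕ → E, ∀ i, LinearIndepOn K (fun e => L i (v e)) (Iio (min d (r i))) by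
    obtain ⟨d, hd⟩ := Finite.exists_le r
    obtain ⟨v, hv⟩ := this d
    exact ⟨v, fun i => by simpa [min_eq_right (hd i)] using hv i⟩
  intro d
  induction d with
  | zero => exact ⟨0, fun i => by simp⟩
  | succ d ih =>
    obtain ⟨v, hv⟩ := ih
    have hv_of_lt {i} (hi : d < r i) : LinearIndepOn K (fun e => L i (v e)) (Iio d) := by
      simpa [min_eq_left hi.le] using hv i
    obtain ⟨x, hx⟩ := exists_forall_apply_notMem (fun i : {i // d < r i} => L i)
      (fun i => span K ((fun e => L i (v e)) '' Iio d)) fun ⟨i, hi⟩ hle =>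
        (Submodule.finrank_mono hle).not_gt ((hv_of_lt hi).finrank_span_image_Iio.trans_lt hi)
    refine ⟨Function.update v d x, fun i => ?_⟩
    have hagree : EqOn (fun e => L i (v e)) (fun e => L i (Function.update v d x e)) (Iio d) :=
      fun e he => by simp [Function.update_of_ne (ne_of_lt (mem_Iio.mp he))]
    by_cases hi : d < r i
    · rw [min_eq_left hi, Iio_add_one_eq_Iic, ← Iio_insert, linearIndepOn_insert (by simp),
        ← hagree.image_eq]
      exact ⟨(hv_of_lt hi).congr hagree, by simpa using hx ⟨i, hi⟩⟩
    · have hvi := hv i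
      rw [min_eq_right (not_lt.mp hi)] at hvi
      rw [min_eq_right (by omega)]
      exact hvi.congr (hagree.mono (Iio_subset_Iio (not_lt.mp hi)))

theorem Submodule.sup_span_image_eq_sup_range {U : Type*} [AddCommGroup U] [Module K U]
    [FiniteDimensional K E] {S : Submodule K E}
    (φ : U →ₗ[K] E) {x : ℕ → U} {k : ℕ}
    (hx : LinearIndepOn K (fun i => (S.mkQ ∘ₗ φ) (x i)) (Iio k))
    (hk : finrank K (range (S.mkQ ∘ₗ φ)) ≤ k) :
    S ⊔ span K ((fun i => φ (x i)) '' Iio k) = S ⊔ range φ := by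
  rw [← comap_map_mkQ, ← comap_map_mkQ, map_span, image_image, ← LinearMap.range_comp]
  congr 1
  exact eq_of_le_of_finrank_le (span_le.mpr (by rintro _ ⟨i, -, rfl⟩; exact mem_range_self _ _))
    (hk.trans hx.finrank_span_image_Iio.ge)

end LinearAlgebra

def staircase (p : ℕ) (k : ℕ → ℕ) : Set (ℕ × ℕ) := {x | x.1 < p ∧ x.2 < k x.1}

theorem staircase_succ (p : ℕ) (k : ℕ → ℕ) :
    staircase (p + 1) k = staircase p k ∪ Prod.mk p '' Iio (k p) := by
  ext ⟨a, b⟩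
  simp only [staircase, mem_ofPred_eq, mem_union, mem_image, mem_Iio, Prod.mk.injEq]
  constructor
  · rintro ⟨ha, hb⟩
    rcases Nat.lt_succ_iff_lt_or_eq.mp ha with ha | rfl
    exacts [Or.inl ⟨ha, hb⟩, Or.inr ⟨b, hb, rfl, rfl⟩]
  · rintro (⟨ha, hb⟩ | ⟨b, hb, rfl, rfl⟩)
    exacts [⟨by omega, hb⟩, ⟨by omega, hb⟩]

section Greedy

variable {K V U B : Type*} [Field K] [AddCommGroup V] [Module K V] [AddCommGroup U] [Module K U]
  [AddCommGroup B] [Module K B] [FiniteDimensional K B] (ψ : V →ₗ[K] U →ₗ[K] B)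

theorem exists_max_finrank_sup_range (S : Submodule K B) :
    ∃ w : V, ∀ w', finrank K ↥(S ⊔ range (ψ w')) ≤ finrank K ↥(S ⊔ range (ψ w)) := by
  set f := fun w => finrank K ↥(S ⊔ range (ψ w))
  have hbdd : BddAbove (Set.range f) :=
    ⟨finrank K B, by rintro _ ⟨w, rfl⟩; exact Submodule.finrank_le _⟩
  obtain ⟨w, hw⟩ := Nat.sSup_mem (Set.range_nonempty f) hbdd
  exact ⟨w, fun w' => (le_csSup hbdd ⟨w', rfl⟩).trans_eq hw.symm⟩

noncomputable def greedyChoice (S : Submodule K B) : V :=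
  (exists_max_finrank_sup_range ψ S).choose

noncomputable def greedyChain : ℕ → Submodule K B
  | 0 => ⊥
  | j + 1 => greedyChain j ⊔ range (ψ (greedyChoice ψ (greedyChain j)))

noncomputable def greedyVec (j : ℕ) : V := greedyChoice ψ (greedyChain ψ j)

noncomputable def greedyRank (j : ℕ) : ℕ :=
  finrank K (greedyChain ψ (j + 1)) - finrank K (greedyChain ψ j)

noncomputable def greedyQuot (j : ℕ) : U →ₗ[K] B ⧸ greedyChain ψ j :=
  (greedyChain ψ j).mkQ ∘ₗ ψ (greedyVec ψ j)

theorem greedyChain_zero : greedyChain ψ 0 = ⊥ := rfl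

theorem greedyChain_succ (j : ℕ) :
    greedyChain ψ (j + 1) = greedyChain ψ j ⊔ range (ψ (greedyVec ψ j)) := rfl

theorem finrank_sup_range_le_greedyChain_succ (j : ℕ) (w : V) :
    finrank K ↥(greedyChain ψ j ⊔ range (ψ w)) ≤ finrank K (greedyChain ψ (j + 1)) :=
  (exists_max_finrank_sup_range ψ (greedyChain ψ j)).choose_spec w

theorem greedyChain_mono : Monotone (greedyChain ψ) :=
  monotone_nat_of_le_succ fun _ => le_sup_left

theorem apply_mem_greedyChain_succ (j : ℕ) (u : U) : ψ (greedyVec ψ j) u ∈ greedyChain ψ (j + 1) :=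
  mem_sup_right (mem_range_self _ u)

theorem finrank_range_greedyQuot (j : ℕ) : finrank K (range (greedyQuot ψ j)) = greedyRank ψ j := by
  have := (greedyChain ψ j).finrank_map_mkQ_add_finrank (range (ψ (greedyVec ψ j)))
  rw [greedyQuot, LinearMap.range_comp, greedyRank, greedyChain_succ]
  omega

theorem ker_greedyQuot_zero : ker (greedyQuot ψ 0) = ker (ψ (greedyVec ψ 0)) := by
  rw [greedyQuot, ker_comp, greedyChain_zero, ker_mkQ, comap_bot]

theorem greedyRank_le_finrank [FiniteDimensional K U] (j : ℕ) : greedyRank ψ j ≤ finrank K U :=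
  finrank_range_greedyQuot ψ j ▸ (greedyQuot ψ j).finrank_range_le

theorem greedyRank_antitone : Antitone (greedyRank ψ) := by
  refine antitone_nat_of_succ_le fun j => ?_
  have hsub := Submodule.finrank_sup_add_finrank_le_of_le (range (ψ (greedyVec ψ (j + 1))))
    (greedyChain_mono ψ (Nat.le_add_right j 1))
  have hmax := finrank_sup_range_le_greedyChain_succ ψ j (greedyVec ψ (j + 1))
  have := Submodule.finrank_mono (greedyChain_mono ψ (Nat.le_add_right (j + 1) 1))
  rw [← greedyChain_succ] at hsub
  -- with `R = range (ψ (greedyVec ψ (j + 1)))`, by submodularity and then maximality at step `j`: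
  -- `k (j+1) = dim (T (j+1) ⊔ R) - dim T (j+1) ≤ dim (T j ⊔ R) - dim T j ≤ k j`
  unfold greedyRank
  omega

theorem sum_greedyRank (q : ℕ) :
    ∑ j ∈ Finset.range q, greedyRank ψ j = finrank K (greedyChain ψ q) := by
  unfold greedyRank
  rw [Finset.sum_range_tsub (fun _ _ h => Submodule.finrank_mono (greedyChain_mono ψ h)),
    greedyChain_zero, finrank_bot, Nat.sub_zero]

theorem exists_greedyChain_succ_eq : ∃ j, greedyChain ψ (j + 1) = greedyChain ψ j := by
  obtain ⟨n, hn⟩ := monotone_stabilizes_iff_noetherian.mpr inferInstance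
    ⟨greedyChain ψ, greedyChain_mono ψ⟩
  exact ⟨n, (hn (n + 1) n.le_succ).symm⟩

noncomputable def greedyLength : ℕ := Nat.find (exists_greedyChain_succ_eq ψ)

theorem greedyChain_greedyLength_succ :
    greedyChain ψ (greedyLength ψ + 1) = greedyChain ψ (greedyLength ψ) :=
  Nat.find_spec (exists_greedyChain_succ_eq ψ)

theorem greedyChain_lt_succ {j : ℕ} (hj : j < greedyLength ψ) :
    greedyChain ψ j < greedyChain ψ (j + 1) :=
  lt_of_le_of_ne (greedyChain_mono ψ j.le_succ) (Ne.symm (Nat.find_min _ hj))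

theorem greedyRank_pos {j : ℕ} (hj : j < greedyLength ψ) : 0 < greedyRank ψ j :=
  Nat.sub_pos_of_lt (Submodule.finrank_lt_finrank_of_lt (greedyChain_lt_succ ψ hj))

theorem range_le_greedyChain_greedyLength (w : V) :
    range (ψ w) ≤ greedyChain ψ (greedyLength ψ) := by
  have hmax := finrank_sup_range_le_greedyChain_succ ψ (greedyLength ψ) w
  rw [greedyChain_greedyLength_succ] at hmax
  exact sup_eq_left.mp (eq_of_le_of_finrank_le le_sup_left hmax).symm

theorem greedyChain_greedyLength : greedyChain ψ (greedyLength ψ) = ⨆ w, range (ψ w) := by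
  refine le_antisymm ?_ (iSup_le (range_le_greedyChain_greedyLength ψ))
  induction greedyLength ψ with
  | zero => exact bot_le
  | succ j ih => exact sup_le ih (le_iSup (fun w => range (ψ w)) _)

theorem linearIndepOn_greedyVec : LinearIndepOn K (greedyVec ψ) (Iio (greedyLength ψ)) := by
  suffices ∀ q ≤ greedyLength ψ, LinearIndepOn K (greedyVec ψ) (Iio q) from this _ le_rfl
  intro q
  induction q with
  | zero => simp
  | succ q ih =>
    intro hq
    rw [Iio_add_one_eq_Iic, ← Iio_insert, linearIndepOn_insert (by simp)]
    refine ⟨ih (by omega), fun hmem => (greedyChain_lt_succ ψ hq).ne ?_⟩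
    have hspan : span K (greedyVec ψ '' Iio q) ≤ ⨅ u, comap (ψ.flip u) (greedyChain ψ q) := by
      rw [span_le]
      rintro _ ⟨j, hj, rfl⟩
      simp only [SetLike.mem_coe, mem_iInf, mem_comap, LinearMap.flip_apply]
      exact fun u => greedyChain_mono ψ (Nat.succ_le_of_lt hj) (apply_mem_greedyChain_succ ψ j u)
    refine (sup_eq_left.mpr ?_).symm
    rintro _ ⟨u, rfl⟩
    exact mem_iInf _ |>.mp (hspan hmem) u

noncomputable def greedyBlock (v : ℕ → U) (x : ℕ × ℕ) : B := ψ (greedyVec ψ x.1) (v x.2)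

theorem exists_seq_linearIndepOn_greedyQuot [Infinite K] :
    ∃ v : ℕ → U, ∀ j < greedyLength ψ,
      LinearIndepOn K (fun e => greedyQuot ψ j (v e)) (Iio (greedyRank ψ j)) := by
  obtain ⟨v, hv⟩ := exists_seq_linearIndepOn_comp fun j : Fin (greedyLength ψ) => greedyQuot ψ j
  exact ⟨v, fun j hj => finrank_range_greedyQuot ψ j ▸ hv ⟨j, hj⟩⟩

theorem linearIndepOn_staircase_and_span_eq {v : ℕ → U}
    (hv : ∀ j < greedyLength ψ,
      LinearIndepOn K (fun e => greedyQuot ψ j (v e)) (Iio (greedyRank ψ j)))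
    {q : ℕ} (hq : q ≤ greedyLength ψ) :
    LinearIndepOn K (greedyBlock ψ v) (staircase q (greedyRank ψ)) ∧
      span K (greedyBlock ψ v '' staircase q (greedyRank ψ)) = greedyChain ψ q := by
  induction q with
  | zero => simp [staircase, greedyChain_zero]
  | succ q ih =>
    obtain ⟨hli, hspan⟩ := ih (by omega)
    have hcol := hv q (by omega)
    rw [staircase_succ]
    refine ⟨hli.union_of_quotient ?_, ?_⟩
    · rw [hspan]
      exact LinearIndepOn.image_of_comp (Prod.mk q) _ hcol
    · rw [image_union, span_union, hspan, image_image, greedyChain_succ]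
      exact sup_span_image_eq_sup_range (ψ (greedyVec ψ q)) hcol (finrank_range_greedyQuot ψ q).le

theorem apply_mem_span_staircase {v : ℕ → U}
    (hv : ∀ j < greedyLength ψ,
      LinearIndepOn K (fun e => greedyQuot ψ j (v e)) (Iio (greedyRank ψ j)))
    (hp : 0 < greedyLength ψ) {w : V} {j : ℕ} (hw : j < greedyLength ψ → w = greedyVec ψ j)
    (u : U) :
    ψ w u ∈ span K (greedyBlock ψ v ''
      staircase (min j (greedyLength ψ - 1) + 1) (greedyRank ψ)) := by
  rw [(linearIndepOn_staircase_and_span_eq ψ hv (by omega)).2]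
  by_cases hj : j < greedyLength ψ
  · rw [hw hj, min_eq_left (by omega)]
    exact apply_mem_greedyChain_succ ψ j u
  · exact greedyChain_mono ψ (by omega) (range_le_greedyChain_greedyLength ψ w ⟨u, rfl⟩)

end Greedy

section Blocks

variable {m₁ n₁ m₂ n₂ : Type*} [Fintype m₁] [Fintype n₁]

noncomputable def blockPairing (M : Matrix (m₁ × m₂) (n₁ × n₂) ℂ) :
    (n₁ → ℂ) →ₗ[ℂ] (m₁ → ℂ) →ₗ[ℂ] Matrix m₂ n₂ ℂ :=
  LinearMap.mk₂ ℂ (fun w u => ∑ a, ∑ b, (u a * w b) • blockOf M a b)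
    (by intros; simp [mul_add, add_smul, Finset.sum_add_distrib])
    (by intros; simp [Finset.smul_sum, smul_smul, mul_left_comm])
    (by intros; simp [add_mul, add_smul, Finset.sum_add_distrib])
    (by intros; simp [Finset.smul_sum, smul_smul, mul_assoc])

theorem blockPairing_apply (M : Matrix (m₁ × m₂) (n₁ × n₂) ℂ) (w : n₁ → ℂ) (u : m₁ → ℂ) :
    blockPairing M w u = ∑ a, ∑ b, (u a * w b) • blockOf M a b := rfl

theorem iSup_range_blockPairing [DecidableEq m₁] [DecidableEq n₁]
    (M : Matrix (m₁ × m₂) (n₁ × n₂) ℂ) :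
    ⨆ w, range (blockPairing M w) = span ℂ (Set.range fun ij : m₁ × n₁ => blockOf M ij.1 ij.2) := by
  refine le_antisymm (iSup_le fun w => ?_) (span_le.mpr ?_)
  · rintro _ ⟨u, rfl⟩
    exact sum_mem fun a _ => sum_mem fun b _ => smul_mem _ _ (subset_span ⟨(a, b), rfl⟩)
  · rintro _ ⟨⟨a, b⟩, rfl⟩
    refine mem_iSup_of_mem (Pi.single b 1) ⟨Pi.single a 1, ?_⟩
    simp [blockPairing_apply, Pi.single_apply]

theorem blockOf_kronecker_one_mul_kronecker_one [Fintype m₂] [Fintype n₂] [DecidableEq m₂]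
    [DecidableEq n₂] (M : Matrix (m₁ × m₂) (n₁ × n₂) ℂ) (U : Matrix m₁ m₁ ℂ)
    (W : Matrix n₁ n₁ ℂ) (i : m₁) (j : n₁) :
    blockOf ((U ⊗ₖ (1 : Matrix m₂ m₂ ℂ)) * M * (W ⊗ₖ (1 : Matrix n₂ n₂ ℂ))) i j =
      blockPairing M (W.col j) (U.row i) := by
  ext k l
  simp only [blockOf, blockPairing_apply, of_apply, mul_apply, kroneckerMap_apply, one_apply,
    Matrix.sum_apply, Matrix.smul_apply, smul_eq_mul, Fintype.sum_prod_type, mul_ite, ite_mul,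
    mul_zero, zero_mul, mul_one, Finset.sum_ite_eq, Finset.sum_ite_eq', Finset.mem_univ, if_true,
    row, col, transpose_apply]
  rw [Finset.sum_comm]
  simp only [Finset.sum_mul]
  exact Finset.sum_congr rfl fun b _ => Finset.sum_congr rfl fun a _ => by ring

theorem sum_greedyRank_blockPairing [Fintype m₂] [Fintype n₂] (M : Matrix (m₁ × m₂) (n₁ × n₂) ℂ) :
    ∑ j ∈ Finset.range (greedyLength (blockPairing M)), greedyRank (blockPairing M) j =
      schmidtRank M := by
  classical
  rw [sum_greedyRank, greedyChain_greedyLength, iSup_range_blockPairing]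
  rfl

end Blocks

/-- Theorem 3 (canonical form under local equivalence): every bipartite matrix `M` of
Schmidt rank `K ≥ 1` is locally equivalent to a matrix `N = (U ⊗ₖ V) * M * (W ⊗ₖ X)`
admitting a staircase block structure: for some `1 ≤ p ≤ n₁` and
`m₁ ≥ k₀ ≥ k₁ ≥ ⋯ ≥ k_{p-1} ≥ 1` with `k₀ + ⋯ + k_{p-1} = K`, the blocks
`{N_{i,j} : j < p, i < k_j}` are linearly independent, the blocks `N_{i,0}` with
`i ≥ k₀` vanish, and every block `N_{i,j}` lies in the span of
`{N_{a,b} : b ≤ min (j, p-1), a < k_b}`. -/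
theorem exists_canonical_form_local_equivalence
    {m₁ m₂ n₁ n₂ : ℕ}
    (M : Matrix (Fin m₁ × Fin m₂) (Fin n₁ × Fin n₂) ℂ)
    (hK : 1 ≤ schmidtRank M) :
    ∃ (U : Matrix (Fin m₁) (Fin m₁) ℂ) (V : Matrix (Fin m₂) (Fin m₂) ℂ)
      (W : Matrix (Fin n₁) (Fin n₁) ℂ) (X : Matrix (Fin n₂) (Fin n₂) ℂ),
      IsUnit U ∧ IsUnit V ∧ IsUnit W ∧ IsUnit X ∧
      ∃ (p : ℕ) (k : ℕ → ℕ) (hp : 1 ≤ p) (hpn : p ≤ n₁)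
        (hmono : ∀ i j : ℕ, i ≤ j → j < p → k j ≤ k i)
        (hone : ∀ j : ℕ, j < p → 1 ≤ k j)
        (hk₀ : k 0 ≤ m₁),
        (∑ j ∈ Finset.range p, k j) = schmidtRank M ∧
        ∃ N : Matrix (Fin m₁ × Fin m₂) (Fin n₁ × Fin n₂) ℂ,
          N = (U ⊗ₖ V) * M * (W ⊗ₖ X) ∧
          -- (a) the staircase blocks are linearly independent
          (LinearIndependent ℂ
            (fun q : {q : ℕ × ℕ // q.1 < p ∧ q.2 < k q.1} =>
              blockOf N
                ⟨q.1.2, lt_of_lt_of_le q.2.2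
                  (le_trans (hmono 0 q.1.1 (Nat.zero_le _) q.2.1) hk₀)⟩
                ⟨q.1.1, lt_of_lt_of_le q.2.1 hpn⟩)) ∧
          -- (b) the first block-column vanishes below row `k₀`
          (∀ i : Fin m₁, k 0 ≤ i.val → blockOf N i ⟨0, by omega⟩ = 0) ∧
          -- (c) every block lies in the span of the staircase blocks to its left
          (∀ (i : Fin m₁) (j : Fin n₁),
            blockOf N i j ∈ Submodule.span ℂ
              {Y : Matrix (Fin m₂) (Fin n₂) ℂ |
                ∃ (a : Fin m₁) (b : Fin n₁),
                  b.val ≤ min j.val (p - 1) ∧ a.val < k b.val ∧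
                  Y = blockOf N a b}) := by
  have hsum := sum_greedyRank_blockPairing M
  set ψ := blockPairing M
  have hp : 1 ≤ greedyLength ψ := Nat.one_le_iff_ne_zero.mpr fun h => by simp [h] at hsum; omega
  have hpn : greedyLength ψ ≤ n₁ :=
    (linearIndepOn_greedyVec ψ).le_finrank_of_Iio.trans_eq (finrank_fin_fun ℂ)
  have hk₀ : greedyRank ψ 0 ≤ m₁ := (greedyRank_le_finrank ψ 0).trans_eq (finrank_fin_fun ℂ)
  obtain ⟨v, hv⟩ := exists_seq_linearIndepOn_greedyQuot ψ
  obtain ⟨f, hf, hfv, hf_ker⟩ := exists_linearIndependent_extend_ker (hv 0 hp)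
    (finrank_range_greedyQuot ψ 0) (finrank_fin_fun ℂ)
  obtain ⟨g, hg, hgv⟩ := exists_linearIndependent_extend (linearIndepOn_greedyVec ψ)
    (finrank_fin_fun ℂ)
  have hblock (i j) : blockOf ((of f ⊗ₖ (1 : Matrix (Fin m₂) (Fin m₂) ℂ)) * M *
      ((of g)ᵀ ⊗ₖ (1 : Matrix (Fin n₂) (Fin n₂) ℂ))) i j = ψ (g j) (f i) :=
    blockOf_kronecker_one_mul_kronecker_one M _ _ i j
  refine ⟨of f, 1, (of g)ᵀ, 1, linearIndependent_rows_iff_isUnit.mp hf, isUnit_one,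
    linearIndependent_cols_iff_isUnit.mp hg, isUnit_one, greedyLength ψ, greedyRank ψ, hp, hpn,
    fun i j hij _ => greedyRank_antitone ψ hij, fun j hj => greedyRank_pos ψ hj, hk₀, hsum, _, rfl,
    ?_, fun i hi => ?_, fun i j => ?_⟩
  · refine (linearIndependent_equiv' (Equiv.subtypeEquivRight fun _ => Iff.rfl) ?_).mpr
      (linearIndepOn_staircase_and_span_eq ψ hv le_rfl).1
    funext q
    simp only [hblock]
    rw [hgv _ q.2.1, hfv _ (q.2.2.trans_le (greedyRank_antitone ψ (Nat.zero_le _)))]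
    rfl
  · rw [hblock, hgv ⟨0, by omega⟩ hp]
    exact mem_ker.mp (ker_greedyQuot_zero ψ ▸ hf_ker i hi)
  · rw [hblock]
    refine span_mono ?_ (apply_mem_span_staircase ψ hv hp (hgv j) (f i))
    rintro _ ⟨x, ⟨hx, hxk⟩, rfl⟩
    have hxk₀ : greedyRank ψ x.1 ≤ greedyRank ψ 0 := greedyRank_antitone ψ (Nat.zero_le _)
    refine ⟨⟨x.2, by omega⟩, ⟨x.1, by omega⟩, by simp; omega, hxk, ?_⟩
    rw [hblock, hgv _ (by simp; omega), hfv _ (by simp; omega)]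
    rfl
end

section
/- For every n ≥ 1 and every positive semidefinite n-partite matrix ρ, the product of the ranks of all single-party reduced matrices bounds the rank of ρ: ∏_{j : Fin n} r(ρ_{{j}}) ≥ r(ρ). -/
open Matrix
open scoped ComplexOrder

/-- Combine a function defined on `S` with a function defined on its complement. -/
def glue {n : ℕ} {A : Fin n → Type*} (S : Finset (Fin n))
    (x : ∀ i : {i // i ∈ S}, A i.val) (z : ∀ i : {i // i ∉ S}, A i.val) :
    ∀ i, A i :=
  fun i => if h : i ∈ S then x ⟨i, h⟩ else z ⟨i, h⟩

/-- The reduced matrix (partial trace over the complement of `S`) of an `n`-partite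
matrix. -/
noncomputable def reduceMat {n : ℕ} {A : Fin n → Type*} [∀ i, Fintype (A i)]
    (ρ : Matrix (∀ i, A i) (∀ i, A i) ℂ) (S : Finset (Fin n)) :
    Matrix (∀ i : {i // i ∈ S}, A i.val) (∀ i : {i // i ∈ S}, A i.val) ℂ :=
  Matrix.of fun x y =>
    ∑ z : ∀ i : {i // i ∉ S}, A i.val, ρ (glue S x z) (glue S y z)

/-!
If `P σⱼ = σⱼ` for the reduced matrix `σⱼ` of party `j`, then `P`, acting on party `j` alone,
fixes `ρ`: with `ρ = S*S` and `Q = P - 1`, the partial trace of `(Q ⊗ 1) S* S (Q ⊗ 1)*` is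
`Q σⱼ Q* = 0`, so its trace vanishes and `(Q ⊗ 1) S* = 0`. Choose `Pⱼ = Bⱼ Cⱼ` for every party,
where the columns of `Bⱼ` are a basis of the column space of `σⱼ` and `Cⱼ` is a left inverse of
`Bⱼ`. Then `⊗ⱼ Pⱼ = (⊗ⱼ Bⱼ)(⊗ⱼ Cⱼ)` fixes `ρ`, so the rank of `ρ` is at most the width
`∏ⱼ rank σⱼ` of `⊗ⱼ Bⱼ`.
-/

open scoped Kronecker

def Equiv.piSplitSingleton {ι : Type*} [DecidableEq ι] (j : ι) (α : ι → Type*) :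
    (∀ i, α i) ≃ α j × ∀ i : {i // i ∉ ({j} : Finset ι)}, α i :=
  (Equiv.piEquivPiSubtypeProd (· ∈ ({j} : Finset ι)) α).trans
    (Equiv.prodCongr (Equiv.piUnique _) (Equiv.refl _))

namespace Matrix

section TraceRight

variable {κ ζ R : Type*} [Fintype κ] [Fintype ζ]

def traceRight [AddCommMonoid R] (M : Matrix (κ × ζ) (κ × ζ) R) : Matrix κ κ R :=
  of fun x y => ∑ z, M (x, z) (y, z)

theorem trace_traceRight [AddCommMonoid R] (M : Matrix (κ × ζ) (κ × ζ) R) :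
    trace (traceRight M) = trace M := by
  simp [traceRight, trace, Fintype.sum_prod_type]

variable [DecidableEq ζ] [CommSemiring R]

theorem traceRight_kronecker_one_mul (X : Matrix κ κ R) (M : Matrix (κ × ζ) (κ × ζ) R) :
    traceRight ((X ⊗ₖ (1 : Matrix ζ ζ R)) * M) = X * traceRight M := by
  ext x y
  simp only [traceRight, of_apply, mul_apply, Fintype.sum_prod_type, kronecker_apply, one_apply,
    mul_ite, mul_one, mul_zero, ite_mul, zero_mul, Finset.sum_ite_eq, Finset.mem_univ, if_true,
    Finset.mul_sum]
  exact Finset.sum_comm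

theorem traceRight_mul_kronecker_one (M : Matrix (κ × ζ) (κ × ζ) R) (X : Matrix κ κ R) :
    traceRight (M * (X ⊗ₖ (1 : Matrix ζ ζ R))) = traceRight M * X := by
  ext x y
  simp only [traceRight, of_apply, mul_apply, Fintype.sum_prod_type, kronecker_apply, one_apply,
    mul_ite, mul_one, mul_zero, Finset.sum_ite_eq', Finset.mem_univ, if_true, Finset.sum_mul]
  exact Finset.sum_comm

end TraceRight

open scoped MatrixOrder in
theorem kronecker_one_mul_eq_self_of_mul_traceRight {κ ζ 𝕜 : Type*} [RCLike 𝕜]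
    [Fintype κ] [Fintype ζ] [DecidableEq κ] [DecidableEq ζ] {M : Matrix (κ × ζ) (κ × ζ) 𝕜}
    (hM : M.PosSemidef)
    {P : Matrix κ κ 𝕜} (hP : P * traceRight M = traceRight M) :
    (P ⊗ₖ (1 : Matrix ζ ζ 𝕜)) * M = M := by
  obtain ⟨S, rfl⟩ := CStarAlgebra.nonneg_iff_eq_star_mul_self.mp hM.nonneg
  set Q := P - 1
  have hQ : Q * traceRight (star S * S) = 0 := by rw [sub_mul, hP, one_mul, sub_self]
  have hQS : (Q ⊗ₖ (1 : Matrix ζ ζ 𝕜)) * star S = 0 := by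
    rw [← trace_mul_conjTranspose_self_eq_zero_iff, ← trace_traceRight, conjTranspose_mul,
      conjTranspose_kronecker, conjTranspose_one, star_eq_conjTranspose,
      conjTranspose_conjTranspose, ← Matrix.mul_assoc, traceRight_mul_kronecker_one,
      Matrix.mul_assoc, traceRight_kronecker_one_mul, ← star_eq_conjTranspose, hQ, zero_mul,
      trace_zero]
  rw [← sub_add_cancel P 1, add_kronecker, one_kronecker_one, add_mul, one_mul,
    ← Matrix.mul_assoc, hQS, zero_mul, zero_add]

theorem exists_mul_mul_eq_self_fin_rank {K m n : Type*} [Field K] [Fintype m] [DecidableEq m]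
    [Fintype n] (σ : Matrix m n K) :
    ∃ (B : Matrix m (Fin σ.rank) K) (C : Matrix (Fin σ.rank) m K), B * C * σ = σ := by
  set W := LinearMap.range σ.mulVecLin
  obtain ⟨g, hg⟩ := W.subtype.exists_leftInverse_of_injective W.ker_subtype
  let e : W ≃ₗ[K] (Fin σ.rank → K) := (Module.finBasis K W).equivFun
  refine ⟨LinearMap.toMatrix' (W.subtype ∘ₗ e.symm.toLinearMap),
    LinearMap.toMatrix' (e.toLinearMap ∘ₗ g), ext_iff_mulVec.mpr fun v => ?_⟩
  have hg' : g (σ *ᵥ v) = ⟨σ *ᵥ v, LinearMap.mem_range_self σ.mulVecLin v⟩ :=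
    LinearMap.congr_fun hg ⟨_, _⟩
  simp [← mulVec_mulVec, hg']

section PiKronecker

variable {ι R : Type*} [Fintype ι] [CommSemiring R]

def piKronecker {α β : ι → Type*} (M : ∀ i, Matrix (α i) (β i) R) :
    Matrix (∀ i, α i) (∀ i, β i) R :=
  of fun x y => ∏ i, M i (x i) (y i)

theorem piKronecker_one {α : ι → Type*} [∀ i, DecidableEq (α i)] :
    piKronecker (fun i => (1 : Matrix (α i) (α i) R)) = 1 := by
  ext x y
  simp [piKronecker, one_apply, Finset.prod_boole, funext_iff]

variable [DecidableEq ι]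

theorem piKronecker_mul {α β γ : ι → Type*} [∀ i, Fintype (β i)]
    (M : ∀ i, Matrix (α i) (β i) R) (N : ∀ i, Matrix (β i) (γ i) R) :
    piKronecker M * piKronecker N = piKronecker fun i => M i * N i := by
  ext x y
  simp only [piKronecker, mul_apply, of_apply, Fintype.prod_sum, Finset.prod_mul_distrib]

theorem piKronecker_mul_eq_self_of_forall_update {α : ι → Type*}
    [∀ i, Fintype (α i)] [∀ i, DecidableEq (α i)] {o : Type*} (P : ∀ i, Matrix (α i) (α i) R)
    {ρ : Matrix (∀ i, α i) o R}
    (hP : ∀ j, piKronecker (Function.update (1 : ∀ i, Matrix (α i) (α i) R) j (P j)) * ρ = ρ) :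
    piKronecker P * ρ = ρ := by
  suffices h : ∀ S : Finset ι, piKronecker (fun i => if i ∈ S then P i else 1) * ρ = ρ by
    simpa using h Finset.univ
  intro S
  induction S using Finset.induction_on with
  | empty => simp [piKronecker_one]
  | insert j S hj ih =>
    have hsplit : (fun i => if i ∈ insert j S then P i else 1) =
        fun i => Function.update (1 : ∀ i, Matrix (α i) (α i) R) j (P j) i *
          if i ∈ S then P i else 1 := by
      funext i
      rcases eq_or_ne i j with rfl | hij
      · simp [hj]
      · simp [hij]
    rw [hsplit, ← piKronecker_mul, Matrix.mul_assoc, ih, hP]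

theorem piKronecker_update_one {α : ι → Type*} [∀ i, DecidableEq (α i)] (j : ι)
    (X : Matrix (α j) (α j) R) :
    piKronecker (Function.update (1 : ∀ i, Matrix (α i) (α i) R) j X) =
      (X ⊗ₖ (1 : Matrix _ _ R)).submatrix (Equiv.piSplitSingleton j α)
        (Equiv.piSplitSingleton j α) := by
  ext x y
  rw [submatrix_apply, kronecker_apply, ← piKronecker_one]
  simp only [piKronecker, of_apply, Fintype.prod_eq_mul_prod_compl j, Function.update_self]
  congr 1
  rw [Finset.prod_congr rfl fun i hi => by rw [Function.update_of_ne (by simpa using hi)]]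
  exact Finset.prod_subtype _ (fun i => by simp) (fun i => (1 : Matrix (α i) (α i) R) (x i) (y i))

end PiKronecker

end Matrix

section Multipartite

variable {n : ℕ} {A : Fin n → Type*} [∀ i, Fintype (A i)]

noncomputable def reduceMatParty (ρ : Matrix (∀ i, A i) (∀ i, A i) ℂ) (j : Fin n) :
    Matrix (A j) (A j) ℂ :=
  (reduceMat ρ {j}).submatrix (Equiv.piUnique fun i : ({j} : Finset (Fin n)) => A i).symm
    (Equiv.piUnique fun i : ({j} : Finset (Fin n)) => A i).symm

theorem rank_reduceMatParty (ρ : Matrix (∀ i, A i) (∀ i, A i) ℂ) (j : Fin n) :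
    (reduceMatParty ρ j).rank = (reduceMat ρ {j}).rank :=
  rank_submatrix _ _ _

-- `glue S` is definitionally `(Equiv.piEquivPiSubtypeProd (· ∈ S) A).symm`.
theorem reduceMatParty_eq_traceRight (ρ : Matrix (∀ i, A i) (∀ i, A i) ℂ) (j : Fin n) :
    reduceMatParty ρ j = traceRight
      (ρ.submatrix (Equiv.piSplitSingleton j A).symm (Equiv.piSplitSingleton j A).symm) :=
  rfl

theorem piKronecker_update_mul_eq_self_of_mul_reduceMatParty [∀ i, DecidableEq (A i)]
    {ρ : Matrix (∀ i, A i) (∀ i, A i) ℂ} (hρ : ρ.PosSemidef) {j : Fin n}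
    {X : Matrix (A j) (A j) ℂ} (hX : X * reduceMatParty ρ j = reduceMatParty ρ j) :
    piKronecker (Function.update (1 : ∀ i, Matrix (A i) (A i) ℂ) j X) * ρ = ρ := by
  set e := Equiv.piSplitSingleton j A
  rw [reduceMatParty_eq_traceRight] at hX
  have hfix := kronecker_one_mul_eq_self_of_mul_traceRight (hρ.submatrix e.symm) hX
  rw [piKronecker_update_one, ← submatrix_id_id ρ, ← e.symm_comp_self, ← submatrix_submatrix,
    submatrix_mul_equiv, hfix]

end Multipartite

theorem prod_rank_single_party_ge_rank_general
    {n : ℕ} {A : Fin n → Type*}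
    [∀ i, Fintype (A i)] [∀ i, DecidableEq (A i)]
    (ρ : Matrix (∀ i, A i) (∀ i, A i) ℂ) (hρ : ρ.PosSemidef) :
    ∏ j : Fin n, (reduceMat ρ {j}).rank ≥ ρ.rank := by
  choose B C hBC using fun j => (reduceMatParty ρ j).exists_mul_mul_eq_self_fin_rank
  have hfix : piKronecker (fun j => B j * C j) * ρ = ρ :=
    piKronecker_mul_eq_self_of_forall_update _ fun j =>
      piKronecker_update_mul_eq_self_of_mul_reduceMatParty hρ (hBC j)
  calc ρ.rank = (piKronecker B * (piKronecker C * ρ)).rank := by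
        rw [← Matrix.mul_assoc, piKronecker_mul, hfix]
    _ ≤ Fintype.card (∀ j, Fin (reduceMatParty ρ j).rank) :=
        (rank_mul_le_left _ _).trans (rank_le_card_width _)
    _ = ∏ j, (reduceMat ρ {j}).rank := by simp [Fintype.card_pi, rank_reduceMatParty]

/-- The product of the ranks of all single-party reduced matrices of a positive
semidefinite `n`-partite matrix bounds the rank of the matrix itself. -/
theorem prod_rank_single_party_ge_rank
    {n : ℕ} (hn : 1 ≤ n) {A : Fin n → Type*}
    [∀ i, Fintype (A i)] [∀ i, DecidableEq (A i)]
    (ρ : Matrix (∀ i, A i) (∀ i, A i) ℂ) (hρ : ρ.PosSemidef) :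
    ∏ j : Fin n, (reduceMat ρ {j}).rank ≥ ρ.rank :=
  prod_rank_single_party_ge_rank_general ρ hρ
end

section
/- For every n ≥ 3 and every positive semidefinite n-partite matrix ρ, the product over k : Fin n of the ranks of the (n−1)-party reductions obtained by tracing out party k bounds the rank of the first single-party reduction: ∏_{k : Fin n} r(ρ_{(Fin n) \ {k}}) ≥ r(ρ_{{0}}). -/
open Matrix
open scoped ComplexOrder

/-!
Write `ρ = Gᴴ * G`. Then `ρ_S = Nᴴ * N` for the flattening `N` of `G` that separates the parties
in `S` from the others (and from the row index of `G`), so `r(ρ_S)` is the dimension of the span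
of the slices `u ↦ G e (u on S, v off S)`. If `P ∪ Q` contains every party, a slice for `P ∩ Q`
expands along `r(ρ_Q)` fixed `Q`-slices, and each of those along `r(ρ_P)` fixed `P`-slices, each
of which is again a `P ∩ Q`-slice; hence `r(ρ_{P ∩ Q}) ≤ r(ρ_P) r(ρ_Q)`. Peeling off one party at
a time from `{0} = ⋂_{k ≠ 0} (Fin n \ {k})` gives `r(ρ_{0}) ≤ ∏_{k ≠ 0} r(ρ_{Fin n \ {k}})`, and
the missing factor `k = 0` is at least `1` unless `ρ = 0`.
-/

open Module Submodule Set

section Slice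

variable {ι : Type*} [DecidableEq ι] {A : ι → Type*} {K : Type*} [Field K] {E : Type*}

/-- The parties outside `S` are frozen at `p.2`. Slices are kept as functions of all parties, not
just of those in `S`, so that slices for different `S` live in one space. -/
def slice (ψ : E → (∀ i, A i) → K) (S : Finset ι) (p : E × ∀ i, A i) : (∀ i, A i) → K :=
  fun u => ψ p.1 (S.piecewise u p.2)

def sliceSpan (ψ : E → (∀ i, A i) → K) (S : Finset ι) : Submodule K ((∀ i, A i) → K) :=
  span K (range (slice ψ S))

variable (ψ : E → (∀ i, A i) → K) (P Q : Finset ι)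

theorem slice_inter_eq_funLeft (p : E × ∀ i, A i) :
    slice ψ (P ∩ Q) p = LinearMap.funLeft K K (P.piecewise · p.2) (slice ψ Q p) := by
  ext u
  simp only [slice, LinearMap.funLeft_apply]
  congr 1
  ext i
  by_cases hP : i ∈ P <;> by_cases hQ : i ∈ Q <;> simp [hP, hQ]

theorem funLeft_slice_comm_of_union_eq_univ [Fintype ι] (hPQ : P ∪ Q = Finset.univ)
    (p : E × ∀ i, A i) (v : ∀ i, A i) :
    LinearMap.funLeft K K (P.piecewise · v) (slice ψ Q p) =
      LinearMap.funLeft K K (Q.piecewise · p.2) (slice ψ P (p.1, v)) := by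
  ext u
  simp only [slice, LinearMap.funLeft_apply]
  congr 1
  ext i
  have hi : i ∈ P ∪ Q := hPQ ▸ Finset.mem_univ i
  rw [Finset.mem_union] at hi
  by_cases hP : i ∈ P <;> by_cases hQ : i ∈ Q <;> simp_all

theorem funLeft_slice_eq_slice_inter (p : E × ∀ i, A i) (w : ∀ i, A i) :
    LinearMap.funLeft K K (Q.piecewise · w) (slice ψ P p) =
      slice ψ (P ∩ Q) (p.1, P.piecewise w p.2) := by
  ext u
  simp only [slice, LinearMap.funLeft_apply]
  congr 1
  ext i
  by_cases hP : i ∈ P <;> by_cases hQ : i ∈ Q <;> simp [hP, hQ]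

theorem slice_inter_mem_span [Fintype ι] (hPQ : P ∪ Q = Finset.univ) {κ μ : Type*}
    {a : κ → E × ∀ i, A i} {b : μ → E × ∀ i, A i}
    (ha : ∀ p, slice ψ Q p ∈ span K (range (slice ψ Q ∘ a)))
    (hb : ∀ p, slice ψ P p ∈ span K (range (slice ψ P ∘ b))) (p : E × ∀ i, A i) :
    slice ψ (P ∩ Q) p ∈ span K (range fun st : κ × μ =>
      slice ψ (P ∩ Q) ((b st.2).1, P.piecewise (a st.1).2 (b st.2).2)) := by
  rw [slice_inter_eq_funLeft]
  refine mem_comap.mp (span_le.mpr (range_subset_iff.mpr fun s => ?_) (ha p))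
  rw [SetLike.mem_coe, mem_comap, Function.comp_apply,
    funLeft_slice_comm_of_union_eq_univ ψ P Q hPQ]
  refine mem_comap.mp (span_le.mpr (range_subset_iff.mpr fun t => ?_) (hb ((a s).1, p.2)))
  rw [SetLike.mem_coe, mem_comap, Function.comp_apply, funLeft_slice_eq_slice_inter]
  exact subset_span ⟨(s, t), rfl⟩

theorem exists_spanning_slices [Finite ι] [∀ i, Finite (A i)] (S : Finset ι) :
    ∃ a : Fin (finrank K (sliceSpan ψ S)) → E × ∀ i, A i,
      ∀ p, slice ψ S p ∈ span K (range (slice ψ S ∘ a)) := by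
  obtain ⟨f, hf, hspan, -⟩ : ∃ f : Fin (finrank K (sliceSpan ψ S)) → _, (∀ i, f i ∈ _) ∧
      span K (range f) = sliceSpan ψ S ∧ _ :=
    exists_fun_fin_finrank_span_eq K (range (slice ψ S))
  choose a ha using hf
  refine ⟨a, fun p => ?_⟩
  rw [show slice ψ S ∘ a = f from funext ha, hspan]
  exact subset_span (mem_range_self p)

theorem finrank_sliceSpan_inter_le [Fintype ι] [∀ i, Finite (A i)]
    (hPQ : P ∪ Q = Finset.univ) :
    finrank K (sliceSpan ψ (P ∩ Q)) ≤ finrank K (sliceSpan ψ P) * finrank K (sliceSpan ψ Q) := by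
  obtain ⟨a, ha⟩ := exists_spanning_slices ψ Q
  obtain ⟨b, hb⟩ := exists_spanning_slices ψ P
  calc finrank K (sliceSpan ψ (P ∩ Q))
      ≤ finrank K (span K (range fun st : Fin _ × Fin _ =>
          slice ψ (P ∩ Q) ((b st.2).1, P.piecewise (a st.1).2 (b st.2).2))) :=
        finrank_mono (span_le.mpr (range_subset_iff.mpr (slice_inter_mem_span ψ P Q hPQ ha hb)))
    _ ≤ finrank K (sliceSpan ψ Q) * finrank K (sliceSpan ψ P) :=
        (finrank_range_le_card _).trans (by simp)
    _ = _ := mul_comm _ _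

theorem finrank_sliceSpan_sdiff_le_prod [Fintype ι] [∀ i, Finite (A i)] {T : Finset ι}
    (hT : T.Nonempty) :
    finrank K (sliceSpan ψ (Finset.univ \ T)) ≤
      ∏ k ∈ T, finrank K (sliceSpan ψ (Finset.univ \ {k})) := by
  induction hT using Finset.Nonempty.cons_induction with
  | singleton k => simp
  | cons i T hi hT ih =>
    have hcover : (Finset.univ \ {i}) ∪ (Finset.univ \ T) = Finset.univ := by
      ext j; by_cases j = i <;> simp_all
    have hinter : (Finset.univ \ {i}) ∩ (Finset.univ \ T) = Finset.univ \ Finset.cons i T hi := by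
      ext j; simp
    rw [Finset.prod_cons, ← hinter]
    exact (finrank_sliceSpan_inter_le ψ _ _ hcover).trans (Nat.mul_le_mul_left _ ih)

theorem one_le_finrank_sliceSpan [Finite ι] [∀ i, Finite (A i)] (hψ : ψ ≠ 0) (S : Finset ι) :
    1 ≤ finrank K (sliceSpan ψ S) := by
  obtain ⟨e, u, hu⟩ : ∃ e u, ψ e u ≠ 0 := by
    by_contra! h
    exact hψ (funext fun e => funext (h e))
  refine one_le_finrank_iff.mpr
    ((Submodule.ne_bot_iff _).mpr ⟨_, subset_span (mem_range_self (e, u)), fun h => hu ?_⟩)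
  simpa [slice, Finset.piecewise_same] using congrFun h u

end Slice

section Flattening

variable {n : ℕ} {A : Fin n → Type*} {E : Type*}

def flattening {K : Type*} (G : Matrix E (∀ i, A i) K) (S : Finset (Fin n)) :
    Matrix (E × ∀ i : {i // i ∉ S}, A i) (∀ i : {i // i ∈ S}, A i) K :=
  of fun p x => G p.1 (glue S x p.2)

theorem reduceMat_conjTranspose_mul_self [∀ i, Fintype (A i)] [Fintype E]
    (G : Matrix E (∀ i, A i) ℂ) (S : Finset (Fin n)) :
    reduceMat (Gᴴ * G) S = (flattening G S)ᴴ * flattening G S := by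
  ext x y
  simp only [reduceMat, flattening, mul_apply, conjTranspose_apply, of_apply, Fintype.sum_prod_type]
  exact Finset.sum_comm

theorem glue_restrict_eq_piecewise (S : Finset (Fin n)) (u v : ∀ i, A i) :
    glue S (fun i => u i) (fun i => v i) = S.piecewise u v := by
  ext i
  by_cases hi : i ∈ S <;> simp [glue, hi]

theorem rank_flattening [∀ i, Fintype (A i)] [∀ i, Nonempty (A i)] [Finite E] {K : Type*}
    [Field K] (G : Matrix E (∀ i, A i) K) (S : Finset (Fin n)) :
    (flattening G S).rank = finrank K (sliceSpan G S) := by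
  let e := Equiv.piEquivPiSubtypeProd (· ∈ S) A
  have hres : Function.Surjective fun u => (e u).1 := Prod.fst_surjective.comp e.surjective
  have hrows : Function.Surjective (Prod.map (id : E → E) fun v => (e v).2) :=
    Function.surjective_id.prodMap (Prod.snd_surjective.comp e.surjective)
  have hslice : slice G S = (LinearMap.funLeft K K (fun u => (e u).1) ∘ (flattening G S).row) ∘
      Prod.map id fun v => (e v).2 := by
    ext p u
    simp [slice, flattening, e, glue_restrict_eq_piecewise]
  unfold sliceSpan
  rw [rank_eq_finrank_span_row, hslice, hrows.range_comp, range_comp, ← map_span]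
  exact (equivMapOfInjective _ (LinearMap.funLeft_injective_of_surjective _ _ _ hres) _).finrank_eq

end Flattening

/-- For a positive semidefinite `n`-partite matrix (`n ≥ 3`), the product over all
parties `k` of the ranks of the `(n-1)`-party reductions obtained by tracing out
party `k` is at least the rank of the reduction onto party `0`. -/
theorem prod_rank_trace_one_out_ge_rank_single
    {n : ℕ} (hn : 3 ≤ n) {A : Fin n → Type*}
    [∀ i, Fintype (A i)]
    (ρ : Matrix (∀ i, A i) (∀ i, A i) ℂ) (hρ : ρ.PosSemidef) :
    ∏ k : Fin n, (reduceMat ρ (Finset.univ \ {k})).rank ≥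
      (reduceMat ρ {⟨0, by omega⟩}).rank := by
  classical
  obtain ⟨G, rfl⟩ : ∃ G : Matrix (∀ i, A i) (∀ i, A i) ℂ, ρ = Gᴴ * G := by
    open MatrixOrder in
    exact CStarAlgebra.nonneg_iff_eq_star_mul_self.mp hρ.nonneg
  rcases eq_or_ne G 0 with rfl | hG
  · have hzero : reduceMat (0 : Matrix (∀ i, A i) (∀ i, A i) ℂ) {⟨0, by omega⟩} = 0 := by
      ext; simp [reduceMat]
    rw [conjTranspose_zero, zero_mul, hzero, rank_zero]
    exact Nat.zero_le _
  obtain ⟨-, u, -⟩ : ∃ e u, G e u ≠ 0 := by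
    by_contra! h
    exact hG (Matrix.ext h)
  have : ∀ i, Nonempty (A i) := fun i => ⟨u i⟩
  simp only [reduceMat_conjTranspose_mul_self, rank_conjTranspose_mul_self, rank_flattening,
    ge_iff_le]
  set i₀ : Fin n := ⟨0, by omega⟩
  have hrest : (Finset.univ \ {i₀}).Nonempty := ⟨⟨1, by omega⟩, by simp [i₀, Fin.ext_iff]⟩
  calc finrank ℂ (sliceSpan G {i₀})
      = finrank ℂ (sliceSpan G (Finset.univ \ (Finset.univ \ {i₀}))) := by
        rw [Finset.sdiff_sdiff_eq_self (Finset.subset_univ _)]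
    _ ≤ ∏ k ∈ Finset.univ \ {i₀}, finrank ℂ (sliceSpan G (Finset.univ \ {k})) :=
        finrank_sliceSpan_sdiff_le_prod G hrest
    _ ≤ ∏ k, finrank ℂ (sliceSpan G (Finset.univ \ {k})) :=
        Finset.prod_le_prod_of_subset_of_one_le' (Finset.subset_univ _)
          fun k _ _ => one_le_finrank_sliceSpan G hG _
end

section
/- Saturation for pure states: let ρ : Matrix (a × b × c) (a × b × c) ℂ be positive semidefinite of rank one (a tripartite pure state). Then r(ρ_AB) · r(ρ_AC) = r(ρ_BC) if and only if r(ρ_B) · r(ρ_C) = r(ρ_A). -/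
open Matrix
open scoped ComplexOrder

section
variable {a b c : Type*} [Fintype a] [Fintype b] [Fintype c]

/-- Partial trace over system `C` of a tripartite matrix. -/
noncomputable def traceOutC (ρ : Matrix (a × b × c) (a × b × c) ℂ) :
    Matrix (a × b) (a × b) ℂ :=
  Matrix.of fun p q => ∑ m : c, ρ (p.1, p.2, m) (q.1, q.2, m)

/-- Partial trace over system `B` of a tripartite matrix. -/
noncomputable def traceOutB (ρ : Matrix (a × b × c) (a × b × c) ℂ) :
    Matrix (a × c) (a × c) ℂ :=
  Matrix.of fun p q => ∑ j : b, ρ (p.1, j, p.2) (q.1, j, q.2)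

/-- Partial trace over system `A` of a tripartite matrix. -/
noncomputable def traceOutA (ρ : Matrix (a × b × c) (a × b × c) ℂ) :
    Matrix (b × c) (b × c) ℂ :=
  Matrix.of fun p q => ∑ i : a, ρ (i, p.1, p.2) (i, q.1, q.2)

/-- Reduction onto system `A` of a tripartite matrix. -/
noncomputable def redA (ρ : Matrix (a × b × c) (a × b × c) ℂ) : Matrix a a ℂ :=
  Matrix.of fun i k => ∑ j : b, ∑ m : c, ρ (i, j, m) (k, j, m)

/-- Reduction onto system `B` of a tripartite matrix. -/
noncomputable def redB (ρ : Matrix (a × b × c) (a × b × c) ℂ) : Matrix b b ℂ :=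
  Matrix.of fun j l => ∑ i : a, ∑ m : c, ρ (i, j, m) (i, l, m)

/-- Reduction onto system `C` of a tripartite matrix. -/
noncomputable def redC (ρ : Matrix (a × b × c) (a × b × c) ℂ) : Matrix c c ℂ :=
  Matrix.of fun m m' => ∑ i : a, ∑ j : b, ρ (i, j, m) (i, j, m')

/-!
A pure state is `ρ = |v⟩⟨v|`. Reshaping `v` into a matrix `M` across a bipartition `X | Y`, the
two reductions are `ρ_X = M Mᴴ` and `ρ_Y = (Mᴴ M)ᵀ`, which both have rank `r(M)`. Hence
`r(ρ_AB) = r(ρ_C)`, `r(ρ_AC) = r(ρ_B)` and `r(ρ_BC) = r(ρ_A)`, and the two conditions coincide.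
-/

theorem Matrix.exists_eq_vecMulVec_of_rank_le_one {K m n : Type*} [Field K] [Fintype n]
    (B : Matrix m n K) (h : B.rank ≤ 1) : ∃ u : m → K, ∃ w : n → K, B = vecMulVec u w := by
  have := FiniteDimensional.span_of_finite K (Set.finite_range B.col)
  rw [rank_eq_finrank_span_cols, finrank_le_one_iff] at h
  obtain ⟨u, hu⟩ := h
  choose w hw using fun x => hu ⟨B.col x, Submodule.subset_span (Set.mem_range_self x)⟩
  refine ⟨u, w, ext fun z x => ?_⟩
  have hcol := congrFun (congrArg Subtype.val (hw x)) z
  simp only [Submodule.coe_smul, Pi.smul_apply, smul_eq_mul, col_apply] at hcol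
  rw [vecMulVec_apply, ← hcol, mul_comm]

theorem Matrix.PosSemidef.exists_eq_vecMulVec_star_of_rank_le_one {n : Type*} [Fintype n]
    {ρ : Matrix n n ℂ} (hρ : ρ.PosSemidef) (h : ρ.rank ≤ 1) :
    ∃ v : n → ℂ, ρ = vecMulVec v (star v) := by
  classical
  open scoped MatrixOrder in
  obtain ⟨B, rfl⟩ := CStarAlgebra.nonneg_iff_eq_star_mul_self.mp hρ.nonneg
  rw [star_eq_conjTranspose, rank_conjTranspose_mul_self] at h
  obtain ⟨u, w, rfl⟩ := exists_eq_vecMulVec_of_rank_le_one B h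
  -- `Bᴴ B = ‖u‖² |w̄⟩⟨w̄|`; writing `‖u‖² = t̄ t` absorbs the scalar into the vector.
  obtain ⟨t, ht⟩ := CStarAlgebra.nonneg_iff_eq_star_mul_self.mp (dotProduct_star_self_nonneg u)
  refine ⟨star (t • w), ?_⟩
  rw [star_eq_conjTranspose, conjTranspose_vecMulVec, vecMulVec_mul_vecMulVec, ht]
  ext x y
  simp only [vecMulVec_apply, Pi.smul_apply, Pi.star_apply, smul_eq_mul, star_mul', star_star]
  ring

variable (v : a × b × c → ℂ)

theorem rank_traceOutC_vecMulVec_star :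
    (traceOutC (vecMulVec v (star v))).rank = (redC (vecMulVec v (star v))).rank := by
  let M : Matrix (a × b) c ℂ := of fun p m => v (p.1, p.2, m)
  have hAB : traceOutC (vecMulVec v (star v)) = M * Mᴴ := by
    ext; simp [M, traceOutC, mul_apply, vecMulVec_apply]
  have hC : redC (vecMulVec v (star v)) = (Mᴴ * M)ᵀ := by
    ext; simp [M, redC, mul_apply, vecMulVec_apply, Fintype.sum_prod_type, mul_comm]
  rw [hAB, hC, rank_transpose, rank_self_mul_conjTranspose, rank_conjTranspose_mul_self]

theorem rank_traceOutB_vecMulVec_star :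
    (traceOutB (vecMulVec v (star v))).rank = (redB (vecMulVec v (star v))).rank := by
  let M : Matrix (a × c) b ℂ := of fun p j => v (p.1, j, p.2)
  have hAC : traceOutB (vecMulVec v (star v)) = M * Mᴴ := by
    ext; simp [M, traceOutB, mul_apply, vecMulVec_apply]
  have hB : redB (vecMulVec v (star v)) = (Mᴴ * M)ᵀ := by
    ext; simp [M, redB, mul_apply, vecMulVec_apply, Fintype.sum_prod_type, mul_comm]
  rw [hAC, hB, rank_transpose, rank_self_mul_conjTranspose, rank_conjTranspose_mul_self]

theorem rank_traceOutA_vecMulVec_star :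
    (traceOutA (vecMulVec v (star v))).rank = (redA (vecMulVec v (star v))).rank := by
  let M : Matrix (b × c) a ℂ := of fun p i => v (i, p.1, p.2)
  have hBC : traceOutA (vecMulVec v (star v)) = M * Mᴴ := by
    ext; simp [M, traceOutA, mul_apply, vecMulVec_apply]
  have hA : redA (vecMulVec v (star v)) = (Mᴴ * M)ᵀ := by
    ext; simp [M, redA, mul_apply, vecMulVec_apply, Fintype.sum_prod_type, mul_comm]
  rw [hBC, hA, rank_transpose, rank_self_mul_conjTranspose, rank_conjTranspose_mul_self]

theorem saturation_iff_of_pure_general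
    (ρ : Matrix (a × b × c) (a × b × c) ℂ) (hρ : ρ.PosSemidef) (hpure : ρ.rank = 1) :
    (traceOutC ρ).rank * (traceOutB ρ).rank = (traceOutA ρ).rank ↔
      (redB ρ).rank * (redC ρ).rank = (redA ρ).rank := by
  obtain ⟨v, rfl⟩ := hρ.exists_eq_vecMulVec_star_of_rank_le_one hpure.le
  rw [rank_traceOutC_vecMulVec_star, rank_traceOutB_vecMulVec_star,
    rank_traceOutA_vecMulVec_star, Nat.mul_comm]

/-- Saturation for tripartite pure states: if `ρ` is positive semidefinite of rank one,
then `r(ρ_AB) · r(ρ_AC) = r(ρ_BC)` if and only if `r(ρ_B) · r(ρ_C) = r(ρ_A)`. -/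
theorem saturation_iff_of_pure
    [DecidableEq a] [DecidableEq b] [DecidableEq c]
    (ρ : Matrix (a × b × c) (a × b × c) ℂ) (hρ : ρ.PosSemidef) (hpure : ρ.rank = 1) :
    (traceOutC ρ).rank * (traceOutB ρ).rank = (traceOutA ρ).rank ↔
      (redB ρ).rank * (redC ρ).rank = (redA ρ).rank :=
  saturation_iff_of_pure_general ρ hρ hpure

end
end

section
/- Saturation for PPT states: let ρ : Matrix (a × b × c) (a × b × c) ℂ be positive semidefinite and suppose its partial transpose on the first system ρ^{Γ_A}, defined by ρ^{Γ_A} (i,j,m) (k,l,m') = ρ (k,j,m) (i,l,m'), is also positive semidefinite. Then r(ρ_AB) · r(ρ_AC) = r(ρ_BC) if and only if r(ρ_AB) = r(ρ_B), r(ρ_AC) = r(ρ_C), and r(ρ_B) · r(ρ_C) = r(ρ_BC). -/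
/-!
Three rank inequalities do the work: `r(ρ_B) ≤ r(ρ_AB)` and `r(ρ_C) ≤ r(ρ_AC)`, which hold for
states with positive partial transpose on `A`, and `r(ρ_BC) ≤ r(ρ_B) · r(ρ_C)`, which holds for
every state. Given them, `r(ρ_AB) · r(ρ_AC) = r(ρ_BC)` squeezes all three into equalities
(`ρ_AB` and `ρ_AC` vanish together, both having trace `tr ρ`).

Both inequalities are proved by writing a positive semidefinite `σ` as the Gram matrix of vectors
`v (i, j)`. The product bound says that the support of `σ` lies in `supp σ_B ⊗ supp σ_C`. For the
PPT bound put `f i u = ∑ j, u j • v (i, j)`: then `σ_B` has kernel `⋂ ker f i` and `r(σ) =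
dim ∑ range f i`, and positivity of `σ^Γ` forces `f q u ⊥ range (f p)` whenever `f p u = 0`. Adding
the maps `f i` one at a time, this orthogonality gives `dim ≤ dim ⋂ ker f i + dim ∑ range f i`.
-/

open Matrix
open scoped ComplexOrder

section
variable {a b c : Type*} [Fintype a] [Fintype b] [Fintype c]

/-- Partial transpose on system `A` of a tripartite matrix. -/
noncomputable def ptOnA (ρ : Matrix (a × b × c) (a × b × c) ℂ) :
    Matrix (a × b × c) (a × b × c) ℂ :=
  Matrix.of fun p q => ρ (q.1, p.2.1, p.2.2) (p.1, q.2.1, q.2.2)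

end

open Module LinearMap
open scoped InnerProductSpace Kronecker

namespace Matrix

section PartialTrace

def traceOutRight {R β γ : Type*} [AddCommMonoid R] [Fintype γ]
    (τ : Matrix (β × γ) (β × γ) R) : Matrix β β R :=
  of fun j l => ∑ m, τ (j, m) (l, m)

def traceOutLeft {R β γ : Type*} [AddCommMonoid R] [Fintype β]
    (τ : Matrix (β × γ) (β × γ) R) : Matrix γ γ R :=
  of fun m m' => ∑ j, τ (j, m) (j, m')

def partialTransposeLeft {R α β : Type*} (σ : Matrix (α × β) (α × β) R) :
    Matrix (α × β) (α × β) R :=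
  of fun p q => σ (q.1, p.2) (p.1, q.2)

variable {R β γ : Type*} [AddCommMonoid R] [Fintype β] [Fintype γ]

theorem trace_traceOutRight (τ : Matrix (β × γ) (β × γ) R) :
    τ.traceOutRight.trace = τ.trace := by
  simp [trace, traceOutRight, Fintype.sum_prod_type]

theorem trace_traceOutLeft (τ : Matrix (β × γ) (β × γ) R) :
    τ.traceOutLeft.trace = τ.trace := by
  simp [trace, traceOutLeft, Fintype.sum_prod_type, Finset.sum_comm (γ := γ)]

end PartialTrace

theorem rank_eq_zero_iff {K m n : Type*} [Field K] [Fintype n] {A : Matrix m n K} :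
    A.rank = 0 ↔ A = 0 := by
  classical
  rw [rank, Submodule.finrank_eq_zero, range_eq_bot, ← toLin'_apply', LinearEquiv.map_eq_zero_iff]

theorem exists_mul_mul_eq_self {K m n : Type*} [Field K] [Fintype m] [Fintype n]
    (A : Matrix m n K) :
    ∃ (X : Matrix n (Fin A.rank) K) (Y : Matrix (Fin A.rank) n K), A * X * Y = A := by
  classical
  obtain ⟨g, hg⟩ := A.mulVecLin.rangeRestrict.exists_rightInverse_of_surjective
    A.mulVecLin.range_rangeRestrict
  let e : range A.mulVecLin ≃ₗ[K] (Fin A.rank → K) := (Module.finBasis K _).equivFun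
  refine ⟨toMatrix' (g ∘ₗ e.symm.toLinearMap),
    toMatrix' (e.toLinearMap ∘ₗ A.mulVecLin.rangeRestrict), ?_⟩
  apply toLin'.injective
  rw [toLin'_mul, toLin'_mul, toLin'_toMatrix', toLin'_toMatrix']
  refine LinearMap.ext fun x => ?_
  have := congr($hg (A.mulVecLin.rangeRestrict x))
  simpa [toLin'_apply'] using congr(Subtype.val $this)

section Gram

variable {𝕜 E n : Type*} [RCLike 𝕜] [NormedAddCommGroup E] [InnerProductSpace 𝕜 E] [Fintype n]

theorem PosSemidef.exists_eq_gram {A : Matrix n n 𝕜} (hA : A.PosSemidef) :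
    ∃ v : n → EuclideanSpace 𝕜 n, A = gram 𝕜 v := by
  classical
  open scoped MatrixOrder in
  obtain ⟨B, rfl⟩ := CStarAlgebra.nonneg_iff_eq_star_mul_self.mp hA.nonneg
  refine ⟨fun i => WithLp.toLp 2 fun k => B k i, ?_⟩
  ext i j
  simp [gram_apply, EuclideanSpace.inner_eq_star_dotProduct, mul_apply, dotProduct, mul_comm]

theorem gram_mulVec_eq_zero_iff (v : n → E) (x : n → 𝕜) :
    gram 𝕜 v *ᵥ x = 0 ↔ ∑ i, x i • v i = 0 := by
  rw [← (posSemidef_gram 𝕜 v).dotProduct_mulVec_zero_iff, star_dotProduct_gram_mulVec,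
    inner_self_eq_zero]

theorem gram_mul_apply {κ : Type*} (v : n → E) (N : Matrix n κ 𝕜) (p : n) (q : κ) :
    (gram 𝕜 v * N) p q = ⟪v p, ∑ r, N r q • v r⟫_𝕜 := by
  simp [mul_apply, gram_apply, inner_sum, inner_smul_right, mul_comm]

theorem rank_gram (v : n → E) :
    (gram 𝕜 v).rank = finrank 𝕜 (range (Fintype.linearCombination 𝕜 v)) := by
  have hker : ker (gram 𝕜 v).mulVecLin = ker (Fintype.linearCombination 𝕜 v) := by
    ext x
    simp [gram_mulVec_eq_zero_iff, Fintype.linearCombination_apply]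
  have h₁ := finrank_range_add_finrank_ker (gram 𝕜 v).mulVecLin
  have h₂ := finrank_range_add_finrank_ker (Fintype.linearCombination 𝕜 v)
  rw [hker] at h₁
  exact Nat.add_right_cancel (h₁.trans h₂.symm)

theorem traceOutRight_gram {β γ : Type*} [Fintype γ] (v : β × γ → E) :
    traceOutRight (gram 𝕜 v) =
      gram 𝕜 fun j => (WithLp.toLp 2 fun m => v (j, m) : PiLp 2 fun _ : γ => E) := by
  ext j l
  simp [traceOutRight, gram_apply, PiLp.inner_apply]

theorem traceOutLeft_gram {β γ : Type*} [Fintype β] (v : β × γ → E) :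
    traceOutLeft (gram 𝕜 v) =
      gram 𝕜 fun m => (WithLp.toLp 2 fun j => v (j, m) : PiLp 2 fun _ : β => E) := by
  ext m m'
  simp [traceOutLeft, gram_apply, PiLp.inner_apply]

end Gram

section ProductBound

variable {𝕜 β γ ι κ : Type*} [RCLike 𝕜] [Fintype β] [Fintype γ]
  {τ : Matrix (β × γ) (β × γ) 𝕜}

theorem PosSemidef.traceOutRight (hτ : τ.PosSemidef) : τ.traceOutRight.PosSemidef := by
  obtain ⟨v, rfl⟩ := hτ.exists_eq_gram
  rw [traceOutRight_gram]
  exact posSemidef_gram 𝕜 _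

theorem PosSemidef.traceOutLeft (hτ : τ.PosSemidef) : τ.traceOutLeft.PosSemidef := by
  obtain ⟨v, rfl⟩ := hτ.exists_eq_gram
  rw [traceOutLeft_gram]
  exact posSemidef_gram 𝕜 _

theorem PosSemidef.mul_kronecker_eq_zero_of_traceOutRight_mul_eq_zero (hτ : τ.PosSemidef)
    {X : Matrix β ι 𝕜} (hX : τ.traceOutRight * X = 0) (Y : Matrix γ κ 𝕜) :
    τ * (X ⊗ₖ Y) = 0 := by
  obtain ⟨v, rfl⟩ := hτ.exists_eq_gram
  have hcol : ∀ i m, ∑ l, X l i • v (l, m) = 0 := by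
    intro i m
    have h : (gram 𝕜 v).traceOutRight *ᵥ (fun l => X l i) = 0 := by
      ext l
      simpa [mulVec, dotProduct, mul_apply] using congr_fun (congr_fun hX l) i
    rw [traceOutRight_gram, gram_mulVec_eq_zero_iff] at h
    simpa using congr(WithLp.ofLp $h m)
  ext p ⟨i, k⟩
  have hsplit : ∑ r, (X ⊗ₖ Y) r (i, k) • v r = ∑ m, Y m k • ∑ l, X l i • v (l, m) := by
    simp only [Fintype.sum_prod_type_right, kroneckerMap_apply, Finset.smul_sum, mul_smul,
      smul_comm (Y _ k)]
  rw [gram_mul_apply, hsplit]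
  simp [hcol]

theorem PosSemidef.mul_kronecker_eq_zero_of_traceOutLeft_mul_eq_zero (hτ : τ.PosSemidef)
    {Y : Matrix γ κ 𝕜} (hY : τ.traceOutLeft * Y = 0) (X : Matrix β ι 𝕜) :
    τ * (X ⊗ₖ Y) = 0 := by
  obtain ⟨v, rfl⟩ := hτ.exists_eq_gram
  have hcol : ∀ k j, ∑ m, Y m k • v (j, m) = 0 := by
    intro k j
    have h : (gram 𝕜 v).traceOutLeft *ᵥ (fun m => Y m k) = 0 := by
      ext m
      simpa [mulVec, dotProduct, mul_apply] using congr_fun (congr_fun hY m) k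
    rw [traceOutLeft_gram, gram_mulVec_eq_zero_iff] at h
    simpa using congr(WithLp.ofLp $h j)
  ext p ⟨i, k⟩
  have hsplit : ∑ r, (X ⊗ₖ Y) r (i, k) • v r = ∑ j, X j i • ∑ m, Y m k • v (j, m) := by
    simp only [Fintype.sum_prod_type, kroneckerMap_apply, Finset.smul_sum, mul_smul]
  rw [gram_mul_apply, hsplit]
  simp [hcol]

theorem PosSemidef.rank_le_rank_traceOutRight_mul_rank_traceOutLeft (hτ : τ.PosSemidef) :
    τ.rank ≤ τ.traceOutRight.rank * τ.traceOutLeft.rank := by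
  classical
  obtain ⟨X₁, Y₁, h₁⟩ := τ.traceOutRight.exists_mul_mul_eq_self
  obtain ⟨X₂, Y₂, h₂⟩ := τ.traceOutLeft.exists_mul_mul_eq_self
  have hr : τ.traceOutRight * (X₁ * Y₁ - 1) = 0 := by
    rw [Matrix.mul_sub, ← Matrix.mul_assoc, h₁, mul_one, sub_self]
  have hl : τ.traceOutLeft * (X₂ * Y₂ - 1) = 0 := by
    rw [Matrix.mul_sub, ← Matrix.mul_assoc, h₂, mul_one, sub_self]
  -- `X₁ * Y₁` and `X₂ * Y₂` are generalized inverses of the two partial traces, and `τ` vanishes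
  -- on `ker τ.traceOutRight ⊗ _` and on `_ ⊗ ker τ.traceOutLeft`, so `τ` factors through
  -- `Fin r₁ × Fin r₂`.
  have hτ_eq : τ * (X₁ ⊗ₖ X₂) * (Y₁ ⊗ₖ Y₂) = τ :=
    calc τ * (X₁ ⊗ₖ X₂) * (Y₁ ⊗ₖ Y₂)
        = τ * ((X₁ * Y₁ - 1) ⊗ₖ (X₂ * Y₂)) + τ * (1 ⊗ₖ (X₂ * Y₂ - 1)) + τ * (1 ⊗ₖ 1) := by
          rw [Matrix.mul_assoc, ← mul_kronecker_mul, ← Matrix.mul_add, ← Matrix.mul_add,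
            add_assoc, ← kronecker_add, sub_add_cancel, ← add_kronecker, sub_add_cancel]
      _ = τ := by
          rw [hτ.mul_kronecker_eq_zero_of_traceOutRight_mul_eq_zero hr,
            hτ.mul_kronecker_eq_zero_of_traceOutLeft_mul_eq_zero hl, one_kronecker_one,
            mul_one, zero_add, zero_add]
  calc τ.rank = (τ * (X₁ ⊗ₖ X₂) * (Y₁ ⊗ₖ Y₂)).rank := by rw [hτ_eq]
    _ ≤ (τ * (X₁ ⊗ₖ X₂)).rank := rank_mul_le_left _ _
    _ ≤ Fintype.card (Fin τ.traceOutRight.rank × Fin τ.traceOutLeft.rank) :=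
        rank_le_card_width _
    _ = τ.traceOutRight.rank * τ.traceOutLeft.rank := by simp

end ProductBound

end Matrix

theorem finrank_le_finrank_iInf_ker_add_finrank_iSup_range {𝕜 E F ι : Type*} [RCLike 𝕜]
    [NormedAddCommGroup E] [InnerProductSpace 𝕜 E] [FiniteDimensional 𝕜 E] [AddCommGroup F]
    [Module 𝕜 F] [FiniteDimensional 𝕜 F] [Fintype ι] (f : ι → F →ₗ[𝕜] E)
    (hf : ∀ p q u, f p u = 0 → ∀ w, ⟪f q u, f p w⟫_𝕜 = 0) :
    finrank 𝕜 F ≤ finrank 𝕜 ↥(⨅ i, ker (f i)) + finrank 𝕜 ↥(⨆ i, range (f i)) := by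
  classical
  suffices key : ∀ s : Finset ι,
      finrank 𝕜 F ≤ finrank 𝕜 ↥(⨅ i ∈ s, ker (f i)) + finrank 𝕜 ↥(⨆ i ∈ s, range (f i)) by
    have hker : (⨅ i ∈ Finset.univ, ker (f i)) = ⨅ i, ker (f i) := by simp
    have hrange : (⨆ i ∈ Finset.univ, range (f i)) = ⨆ i, range (f i) := by simp
    rw [← hker, ← hrange]
    exact key Finset.univ
  intro s
  induction s using Finset.induction_on with
  | empty =>
    have hker : (⨅ i ∈ (∅ : Finset ι), ker (f i)) = ⊤ := by simp
    rw [hker, finrank_top]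
    exact Nat.le_add_right _ _
  | insert m s _ ih =>
    rw [Finset.iInf_insert, Finset.iSup_insert]
    set K := ⨅ i ∈ s, ker (f i)
    set R := ⨆ i ∈ s, range (f i)
    have hnullity : finrank 𝕜 (K.map (f m)) + finrank 𝕜 ↥(ker (f m) ⊓ K) = finrank 𝕜 K := by
      rw [← range_domRestrict, ← finrank_range_add_finrank_ker ((f m).domRestrict K),
        ker_domRestrict, (Submodule.comapSubtypeEquivOfLe inf_le_right).finrank_eq.symm,
        Submodule.comap_inf, Submodule.comap_subtype_self, inf_top_eq]
    have hortho : K.map (f m) ⟂ R := by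
      rw [Submodule.isOrtho_iff_inner_eq]
      rintro _ ⟨u, hu, rfl⟩ y hy
      have hle : R ≤ (𝕜 ∙ f m u)ᗮ := by
        refine iSup₂_le fun i hi => ?_
        rintro _ ⟨w, rfl⟩
        rw [Submodule.mem_orthogonal_singleton_iff_inner_right]
        exact hf i m u ((Submodule.mem_iInf _).mp ((Submodule.mem_iInf _).mp hu i) hi) w
      exact Submodule.mem_orthogonal_singleton_iff_inner_right.mp (hle hy)
    have hsup := Submodule.finrank_sup_add_finrank_inf_eq (K.map (f m)) R
    rw [hortho.disjoint.eq_bot, finrank_bot, add_zero] at hsup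
    have hmono := Submodule.finrank_mono (sup_le_sup_right (map_le_range (f := f m) (p := K)) R)
    omega

namespace Matrix

section PPTBound

variable {𝕜 E α β : Type*} [RCLike 𝕜] [NormedAddCommGroup E] [InnerProductSpace 𝕜 E]
  [Fintype α] [Fintype β]

theorem star_dotProduct_partialTransposeLeft_gram_mulVec [DecidableEq α] (v : α × β → E)
    (p q : α) (u w : β → 𝕜) :
    star (Function.uncurry (Pi.single q w)) ⬝ᵥ
        partialTransposeLeft (gram 𝕜 v) *ᵥ Function.uncurry (Pi.single p u) =
      ⟪∑ j, w j • v (p, j), ∑ j, u j • v (q, j)⟫_𝕜 := by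
  simp only [dotProduct, Pi.star_apply, RCLike.star_def, mulVec, partialTransposeLeft,
    gram_apply, of_apply, Fintype.sum_prod_type, Function.uncurry_apply_pair, Pi.single_apply,
    ite_apply, Pi.zero_apply, mul_ite, mul_zero, Finset.sum_ite_irrel, Finset.sum_const_zero,
    Finset.sum_ite_eq', Finset.mem_univ, ↓reduceIte, Finset.mul_sum, apply_ite (starRingEnd 𝕜),
    map_zero, ite_mul, zero_mul, inner_sum, inner_smul_right, sum_inner, inner_smul_left]
  rw [Finset.sum_comm]
  exact Finset.sum_congr rfl fun _ _ => Finset.sum_congr rfl fun _ _ => by ring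

theorem inner_sum_smul_eq_zero_of_posSemidef_partialTransposeLeft_gram {v : α × β → E}
    (hv : (partialTransposeLeft (gram 𝕜 v)).PosSemidef) {p : α} {u : β → 𝕜}
    (hu : ∑ j, u j • v (p, j) = 0) (q : α) (w : β → 𝕜) :
    ⟪∑ j, u j • v (q, j), ∑ j, w j • v (p, j)⟫_𝕜 = 0 := by
  classical
  have hker : partialTransposeLeft (gram 𝕜 v) *ᵥ Function.uncurry (Pi.single p u) = 0 := by
    rw [← hv.dotProduct_mulVec_zero_iff, star_dotProduct_partialTransposeLeft_gram_mulVec, hu,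
      inner_zero_left]
  have h := congr(star (Function.uncurry (Pi.single q w)) ⬝ᵥ $hker)
  rw [star_dotProduct_partialTransposeLeft_gram_mulVec, dotProduct_zero] at h
  rw [← inner_conj_symm, h, map_zero]

theorem PosSemidef.rank_traceOutLeft_le_rank {σ : Matrix (α × β) (α × β) 𝕜}
    (hσ : σ.PosSemidef) (hσΓ : (partialTransposeLeft σ).PosSemidef) :
    σ.traceOutLeft.rank ≤ σ.rank := by
  obtain ⟨v, rfl⟩ := hσ.exists_eq_gram
  rw [traceOutLeft_gram, rank_gram, rank_gram]
  let f : α → (β → 𝕜) →ₗ[𝕜] EuclideanSpace 𝕜 (α × β) := fun i =>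
    Fintype.linearCombination 𝕜 fun j => v (i, j)
  set g := Fintype.linearCombination 𝕜 fun j =>
    (WithLp.toLp 2 fun i => v (i, j) : PiLp 2 fun _ : α => EuclideanSpace 𝕜 (α × β))
  have hcore := finrank_le_finrank_iInf_ker_add_finrank_iSup_range f fun p q u hu w => by
    simpa [f, Fintype.linearCombination_apply] using
      inner_sum_smul_eq_zero_of_posSemidef_partialTransposeLeft_gram hσΓ
        (by simpa [f, Fintype.linearCombination_apply] using hu) q w
  have hker : ker g = ⨅ i, ker (f i) := by
    ext u
    rw [mem_ker, Submodule.mem_iInf, Fintype.linearCombination_apply,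
      ← (WithLp.ofLp_injective 2).eq_iff, WithLp.ofLp_sum, WithLp.ofLp_zero, funext_iff]
    simp [f, Fintype.linearCombination_apply]
  have hrange : ⨆ i, range (f i) ≤ range (Fintype.linearCombination 𝕜 v) := by
    classical
    refine iSup_le fun i => ?_
    rintro _ ⟨u, rfl⟩
    refine ⟨Function.uncurry (Pi.single i u), ?_⟩
    simp [f, Fintype.linearCombination_apply, Fintype.sum_prod_type, Pi.single_apply, ite_apply]
  have hnullity := finrank_range_add_finrank_ker g
  rw [hker] at hnullity
  rw [finrank_fintype_fun_eq_card] at hnullity hcore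
  have := Submodule.finrank_mono hrange
  omega

end PPTBound

end Matrix

theorem Nat.eq_and_eq_of_mul_le_mul {x X y Y : ℕ} (hx : x ≤ X) (hy : y ≤ Y) (h : X * Y ≤ x * y)
    (h0 : X = 0 ↔ Y = 0) : x = X ∧ y = Y := by
  rcases Nat.eq_zero_or_pos X with hX | hX
  · have hY := h0.mp hX
    omega
  · have hY : 0 < Y := Nat.pos_of_ne_zero (mt h0.mpr hX.ne')
    constructor
    · exact le_antisymm hx (Nat.le_of_mul_le_mul_right (h.trans (Nat.mul_le_mul_left x hy)) hY)
    · exact le_antisymm hy (Nat.le_of_mul_le_mul_left (h.trans (Nat.mul_le_mul_right y hx)) hX)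

section

variable {a b c : Type*} [Fintype a]

theorem Matrix.PosSemidef.traceOutC [Fintype b] [Fintype c]
    {ρ : Matrix (a × b × c) (a × b × c) ℂ} (hρ : ρ.PosSemidef) : (traceOutC ρ).PosSemidef :=
  (hρ.submatrix fun p : (a × b) × c => (p.1.1, p.1.2, p.2)).traceOutRight

theorem Matrix.PosSemidef.traceOutB [Fintype b] [Fintype c]
    {ρ : Matrix (a × b × c) (a × b × c) ℂ} (hρ : ρ.PosSemidef) : (traceOutB ρ).PosSemidef :=
  (hρ.submatrix fun p : (a × c) × b => (p.1.1, p.2, p.1.2)).traceOutRight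

theorem posSemidef_partialTransposeLeft_traceOutC [Fintype b] [Fintype c]
    {ρ : Matrix (a × b × c) (a × b × c) ℂ} (hρ : (ptOnA ρ).PosSemidef) :
    (partialTransposeLeft (traceOutC ρ)).PosSemidef :=
  (hρ.submatrix fun p : (a × b) × c => (p.1.1, p.1.2, p.2)).traceOutRight

theorem posSemidef_partialTransposeLeft_traceOutB [Fintype b] [Fintype c]
    {ρ : Matrix (a × b × c) (a × b × c) ℂ} (hρ : (ptOnA ρ).PosSemidef) :
    (partialTransposeLeft (traceOutB ρ)).PosSemidef :=
  (hρ.submatrix fun p : (a × c) × b => (p.1.1, p.2, p.1.2)).traceOutRight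

theorem redB_eq_traceOutLeft_traceOutC [Fintype c] (ρ : Matrix (a × b × c) (a × b × c) ℂ) :
    redB ρ = (traceOutC ρ).traceOutLeft :=
  rfl

theorem redC_eq_traceOutLeft_traceOutB [Fintype b] (ρ : Matrix (a × b × c) (a × b × c) ℂ) :
    redC ρ = (traceOutB ρ).traceOutLeft :=
  rfl

theorem redB_eq_traceOutRight_traceOutA [Fintype c] (ρ : Matrix (a × b × c) (a × b × c) ℂ) :
    redB ρ = (traceOutA ρ).traceOutRight := by
  ext j l
  exact Finset.sum_comm

theorem redC_eq_traceOutLeft_traceOutA [Fintype b] (ρ : Matrix (a × b × c) (a × b × c) ℂ) :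
    redC ρ = (traceOutA ρ).traceOutLeft := by
  ext m m'
  exact Finset.sum_comm

theorem trace_traceOutC_eq_trace_traceOutB [Fintype b] [Fintype c]
    (ρ : Matrix (a × b × c) (a × b × c) ℂ) : (traceOutC ρ).trace = (traceOutB ρ).trace := by
  rw [← trace_traceOutLeft (traceOutC ρ), ← redB_eq_traceOutLeft_traceOutC,
    redB_eq_traceOutRight_traceOutA, trace_traceOutRight, ← trace_traceOutLeft (traceOutB ρ),
    ← redC_eq_traceOutLeft_traceOutB, redC_eq_traceOutLeft_traceOutA, trace_traceOutLeft]

end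

section

variable {a b c : Type*} [Fintype a] [Fintype b] [Fintype c]

theorem saturation_iff_of_PPT_general
    (ρ : Matrix (a × b × c) (a × b × c) ℂ) (hρ : ρ.PosSemidef)
    (hPPT : (ptOnA ρ).PosSemidef) :
    (traceOutC ρ).rank * (traceOutB ρ).rank = (traceOutA ρ).rank ↔
      (traceOutC ρ).rank = (redB ρ).rank ∧
        (traceOutB ρ).rank = (redC ρ).rank ∧
        (redB ρ).rank * (redC ρ).rank = (traceOutA ρ).rank := by
  have hB : (redB ρ).rank ≤ (traceOutC ρ).rank := by
    rw [redB_eq_traceOutLeft_traceOutC]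
    exact hρ.traceOutC.rank_traceOutLeft_le_rank (posSemidef_partialTransposeLeft_traceOutC hPPT)
  have hC : (redC ρ).rank ≤ (traceOutB ρ).rank := by
    rw [redC_eq_traceOutLeft_traceOutB]
    exact hρ.traceOutB.rank_traceOutLeft_le_rank (posSemidef_partialTransposeLeft_traceOutB hPPT)
  have hBC : (traceOutA ρ).rank ≤ (redB ρ).rank * (redC ρ).rank := by
    rw [redB_eq_traceOutRight_traceOutA, redC_eq_traceOutLeft_traceOutA]
    exact hρ.traceOutLeft.rank_le_rank_traceOutRight_mul_rank_traceOutLeft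
  have hzero : (traceOutC ρ).rank = 0 ↔ (traceOutB ρ).rank = 0 := by
    rw [Matrix.rank_eq_zero_iff, Matrix.rank_eq_zero_iff, ← hρ.traceOutC.trace_eq_zero_iff,
      ← hρ.traceOutB.trace_eq_zero_iff, trace_traceOutC_eq_trace_traceOutB]
  constructor
  · intro h
    obtain ⟨hB_eq, hC_eq⟩ := Nat.eq_and_eq_of_mul_le_mul hB hC (h ▸ hBC) hzero
    exact ⟨hB_eq.symm, hC_eq.symm, by rw [hB_eq, hC_eq, h]⟩
  · rintro ⟨hB_eq, hC_eq, hBC_eq⟩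
    rw [hB_eq, hC_eq, hBC_eq]

/-- Saturation for PPT states: if `ρ` and its partial transpose on system `A` are both
positive semidefinite, then `r(ρ_AB) · r(ρ_AC) = r(ρ_BC)` if and only if
`r(ρ_AB) = r(ρ_B)`, `r(ρ_AC) = r(ρ_C)`, and `r(ρ_B) · r(ρ_C) = r(ρ_BC)`. -/
theorem saturation_iff_of_PPT
    [DecidableEq a] [DecidableEq b] [DecidableEq c]
    (ρ : Matrix (a × b × c) (a × b × c) ℂ) (hρ : ρ.PosSemidef)
    (hPPT : (ptOnA ρ).PosSemidef) :
    (traceOutC ρ).rank * (traceOutB ρ).rank = (traceOutA ρ).rank ↔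
      (traceOutC ρ).rank = (redB ρ).rank ∧
        (traceOutB ρ).rank = (redC ρ).rank ∧
        (redB ρ).rank * (redC ρ).rank = (traceOutA ρ).rank :=
  saturation_iff_of_PPT_general ρ hρ hPPT

end
end
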